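/- arXiv:2409.05638 — 12 statements merged into one kernel-verified Lean document; each statement's English description precedes it below -/
import Mathlib

section
/- Let $A, B$ be finite non-empty subsets of an abelian group $G$ with $|A + B| \leq K|B|$ for some real $K \geq 1$. Then for all nonnegative integers $m, n$, we have $|mA - nA| \leq K^{m+n}|B|$. -/
open scoped Pointwise

/-- Plünnecke–Ruzsa inequality: if `|A + B| ≤ K|B|` then `|mA - nA| ≤ K^(m+n)|B|`. -/
theorem stmt_1 {G : Type*} [AddCommGroup G] [DecidableEq G]
    (A B : Finset G) (hA : A.Nonempty) (hB : B.Nonempty) (K : ℝ) (hK : 1 ≤ K)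
    (h : ((A + B).card : ℝ) ≤ K * B.card) (m n : ℕ) :
    ((m • A - n • A).card : ℝ) ≤ K ^ (m + n) * B.card := by
  have key := Finset.pluennecke_ruzsa_inequality_nsmul_sub_nsmul_add hB A m n
  have hBpos : (0 : ℝ) < B.card := by exact_mod_cast hB.card_pos
  have key' : ((m • A - n • A).card : ℝ) ≤
      (((B + A).card : ℝ) / B.card) ^ (m + n) * B.card := by
    have := (NNRat.cast_le (K := ℝ)).2 key
    push_cast at this
    convert this using 3 <;> norm_num
  refine key'.trans ?_
  have hBA : ((B + A).card : ℝ) = ((A + B).card : ℝ) := by rw [add_comm]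
  have hdiv : ((B + A).card : ℝ) / B.card ≤ K := by
    rw [hBA, div_le_iff₀ hBpos]; exact h
  gcongr
end

section
/- Let $k, N \geq 2$ be integers, let $G$ be an abelian group, and let $A_1, \dots, A_k \subseteq G$ be finite sets with $|A_1| = \dots = |A_k| = N$. Set $X = A_1 + \dots + A_k$. If $|X| \leq K N$ for some real $K \geq 1$, then $|X + X| \leq K^7 N$. -/
open scoped Pointwise

open Finset in
private lemma sum_finset_nonempty {G : Type*} [AddCommGroup G] [DecidableEq G]
    {ι : Type*} (s : Finset ι) (f : ι → Finset G) (hf : ∀ i ∈ s, (f i).Nonempty) :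
    (∑ i ∈ s, f i).Nonempty := by
  induction s using Finset.cons_induction with
  | empty => exact ⟨0, by simp [Finset.mem_zero]⟩
  | cons a s ha ih =>
    rw [Finset.sum_cons]
    exact (hf a (Finset.mem_cons_self a s)).add (ih fun i hi => hf i (Finset.mem_cons_of_mem hi))

open Finset in
private lemma pluen_aux {G : Type*} [AddCommGroup G] [DecidableEq G]
    (B C : Finset G) (hC : C.Nonempty) :
    (3 • B).card * C.card ^ 2 ≤ (C + B).card ^ 3 := by
  have h := Finset.pluennecke_ruzsa_inequality_nsmul_add hC B 3
  have hC0 : ((C.card : ℚ≥0)) ≠ 0 := Nat.cast_ne_zero.2 hC.card_pos.ne'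
  have key : ((3 • B).card : ℚ≥0) * C.card ^ 2 ≤ (C + B).card ^ 3 := by
    calc ((3 • B).card : ℚ≥0) * C.card ^ 2
        ≤ (((C + B).card / C.card) ^ 3 * C.card) * C.card ^ 2 := by gcongr
      _ = ((((C + B).card : ℚ≥0) / C.card) * C.card) ^ 3 := by ring
      _ = ((C + B).card : ℚ≥0) ^ 3 := by rw [div_mul_cancel₀ _ hC0]
  exact_mod_cast key

/-- If `A₁, …, A_k` all have size `N` and `X = A₁ + ⋯ + A_k` satisfies `|X| ≤ KN`,
then `|X + X| ≤ K^7 N`. -/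
theorem stmt_3 {G : Type*} [AddCommGroup G] [DecidableEq G]
    (k N : ℕ) (hk : 2 ≤ k) (hN : 2 ≤ N) (A : Fin k → Finset G)
    (hcard : ∀ i, (A i).card = N) (K : ℝ) (hK : 1 ≤ K)
    (X : Finset G) (hX : X = ∑ i, A i)
    (h : (X.card : ℝ) ≤ K * N) :
    ((X + X).card : ℝ) ≤ K ^ 7 * N := by
  classical
  set i0 : Fin k := ⟨0, by omega⟩ with hi0
  set i1 : Fin k := ⟨1, by omega⟩ with hi1
  set D : Finset G := ∑ i ∈ Finset.univ.erase i0, A i with hD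
  have hXD : X = A i0 + D := by
    rw [hX, ← Finset.add_sum_erase _ _ (Finset.mem_univ i0)]
  have hAne : ∀ i, (A i).Nonempty := fun i =>
    Finset.card_pos.1 (by rw [hcard i]; omega)
  have hi10 : i1 ∈ Finset.univ.erase i0 := by
    simp [hi0, hi1, Fin.ext_iff]
  have hDN : N ≤ D.card := by
    have hrest : (∑ i ∈ (Finset.univ.erase i0).erase i1, A i).Nonempty :=
      sum_finset_nonempty _ _ (fun i _ => hAne i)
    have hDeq : D = A i1 + ∑ i ∈ (Finset.univ.erase i0).erase i1, A i := by
      rw [hD, ← Finset.add_sum_erase _ _ hi10]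
    calc N = (A i1).card := (hcard i1).symm
      _ ≤ (A i1 + ∑ i ∈ (Finset.univ.erase i0).erase i1, A i).card :=
          Finset.card_le_card_add_right hrest
      _ = D.card := by rw [← hDeq]
  have hDne : D.Nonempty := sum_finset_nonempty _ _ (fun i _ => hAne i)
  -- Plünnecke bounds
  have h1 : (3 • A i0).card * D.card ^ 2 ≤ X.card ^ 3 := by
    have := pluen_aux (A i0) D hDne
    rwa [add_comm D (A i0), ← hXD] at this
  have h2 : (3 • D).card * N ^ 2 ≤ X.card ^ 3 := by
    have := pluen_aux D (A i0) (hAne i0)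
    rwa [hcard i0, ← hXD] at this
  -- Ruzsa triangle bounds
  have h3 : (2 • A i0 + D).card * N ≤ (3 • A i0).card * X.card := by
    have := Finset.ruzsa_triangle_inequality_add_add_add (2 • A i0) (A i0) D
    rwa [← succ_nsmul (A i0) 2, hcard i0, ← hXD] at this
  have h4 : (X + X).card * D.card ≤ (2 • A i0 + D).card * (3 • D).card := by
    have := Finset.ruzsa_triangle_inequality_add_add_add (2 • A i0) D (2 • D)
    have hXX : X + X = 2 • A i0 + 2 • D := by
      rw [hXD, two_nsmul, two_nsmul, add_add_add_comm]
    have hD3 : D + 2 • D = 3 • D := by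
      rw [add_comm, ← succ_nsmul D 2]
    rwa [← hXX, hD3] at this
  -- Combine in ℕ : (X+X).card * D.card^3 * N^3 ≤ X.card^7
  have hmain : (X + X).card * D.card ^ 3 * N ^ 3 ≤ X.card ^ 7 := by
    calc (X + X).card * D.card ^ 3 * N ^ 3
        = ((X + X).card * D.card) * N * (N ^ 2 * D.card ^ 2) := by ring
      _ ≤ ((2 • A i0 + D).card * (3 • D).card) * N * (N ^ 2 * D.card ^ 2) := by
          exact Nat.mul_le_mul_right _ (Nat.mul_le_mul_right _ h4)
      _ = ((2 • A i0 + D).card * N) * ((3 • D).card * N ^ 2) * D.card ^ 2 := by ring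
      _ ≤ ((3 • A i0).card * X.card) * (X.card ^ 3) * D.card ^ 2 := by
          exact Nat.mul_le_mul_right _ (Nat.mul_le_mul h3 h2)
      _ = ((3 • A i0).card * D.card ^ 2) * X.card ^ 4 := by ring
      _ ≤ X.card ^ 3 * X.card ^ 4 := Nat.mul_le_mul_right _ h1
      _ = X.card ^ 7 := by ring
  have hmain2 : (X + X).card * N ^ 6 ≤ X.card ^ 7 := by
    refine le_trans ?_ hmain
    have : N ^ 3 ≤ D.card ^ 3 := Nat.pow_le_pow_left hDN 3
    calc (X + X).card * N ^ 6 = (X + X).card * N ^ 3 * N ^ 3 := by ring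
      _ ≤ (X + X).card * D.card ^ 3 * N ^ 3 :=
          Nat.mul_le_mul_right _ (Nat.mul_le_mul_left _ this)
  -- Finish in ℝ
  have hNpos : (0 : ℝ) < N := by positivity
  have hN6 : (0 : ℝ) < (N : ℝ) ^ 6 := by positivity
  have hXnn : (0 : ℝ) ≤ (X.card : ℝ) := by positivity
  have hcast : ((X + X).card : ℝ) * (N : ℝ) ^ 6 ≤ (X.card : ℝ) ^ 7 := by
    exact_mod_cast hmain2
  have hfin : ((X + X).card : ℝ) * (N : ℝ) ^ 6 ≤ (K ^ 7 * N) * (N : ℝ) ^ 6 := by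
    calc ((X + X).card : ℝ) * (N : ℝ) ^ 6 ≤ (X.card : ℝ) ^ 7 := hcast
      _ ≤ (K * N) ^ 7 := by gcongr
      _ = (K ^ 7 * N) * (N : ℝ) ^ 6 := by ring
  exact le_of_mul_le_mul_right hfin hN6
end

section
/- Let $G$ be an abelian group, let $A_1, A_2 \subseteq G$ be finite sets with $|A_1| = |A_2| = N \geq 2$, and set $X = A_1 + A_2$. If $|X| \leq KN$ for some $K \geq 1$, then $|X + X| \leq K^7 N$. -/
open scoped Pointwise

/-- Plünnecke–Ruzsa specialized: if `|A| = N` and `|A + B| ≤ K N` then `|n • B| ≤ K^n N`. -/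
lemma plun_aux {G : Type*} [AddCommGroup G] [DecidableEq G] {A B : Finset G} {N : ℕ} {K : ℝ}
    (hA : A.Nonempty) (hcard : A.card = N) (hK : 0 ≤ K)
    (h : ((A + B).card : ℝ) ≤ K * N) (n : ℕ) :
    (((n • B : Finset G)).card : ℝ) ≤ K ^ n * N := by
  have hN : (0 : ℝ) < N := by
    have := hA.card_pos
    rw [hcard] at this
    exact_mod_cast this
  have key := Finset.pluennecke_ruzsa_inequality_nsmul_add hA B n
  have key' : (((n • B : Finset G)).card : ℝ) ≤ (((A + B).card : ℝ) / A.card) ^ n * A.card := by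
    have key2 : (((((n • B : Finset G)).card : ℚ≥0)) : ℝ) ≤
        ((((((A + B).card : ℚ≥0) / ((A.card : ℚ≥0))) ^ n * ((A.card : ℚ≥0))) : ℚ≥0) : ℝ) := by
      exact_mod_cast key
    push_cast at key2
    exact key2
  rw [hcard] at key'
  have hdiv : (((A + B).card : ℝ) / N) ≤ K := by
    rw [div_le_iff₀ hN]; exact h
  calc (((n • B : Finset G)).card : ℝ) ≤ (((A + B).card : ℝ) / N) ^ n * N := key'
    _ ≤ K ^ n * N :=
        mul_le_mul_of_nonneg_right (pow_le_pow_left₀ (by positivity) hdiv n) hN.le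

/-- Krachun–Petrov: if `|A₁| = |A₂| = N ≥ 2` and `X = A₁ + A₂` satisfies `|X| ≤ KN`,
then `|X + X| ≤ K^7 N`. -/
theorem stmt_4 {G : Type*} [AddCommGroup G] [DecidableEq G]
    (N : ℕ) (hN : 2 ≤ N) (A₁ A₂ : Finset G)
    (h₁ : A₁.card = N) (h₂ : A₂.card = N) (K : ℝ) (hK : 1 ≤ K)
    (X : Finset G) (hX : X = A₁ + A₂)
    (h : (X.card : ℝ) ≤ K * N) :
    ((X + X).card : ℝ) ≤ K ^ 7 * N := by
  subst hX
  have hK0 : (0 : ℝ) ≤ K := le_trans zero_le_one hK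
  have hN0 : (0 : ℝ) < N := by
    have : 0 < N := by omega
    exact_mod_cast this
  have hA1 : A₁.Nonempty := Finset.card_pos.mp (by omega)
  have hA2 : A₂.Nonempty := Finset.card_pos.mp (by omega)
  have h21 : ((A₂ + A₁).card : ℝ) ≤ K * N := by rw [add_comm]; exact h
  -- Plünnecke–Ruzsa bounds on iterated sumsets of a single set
  have h3A1 : (((3 • A₁ : Finset G)).card : ℝ) ≤ K ^ 3 * N := plun_aux hA2 h₂ hK0 h21 3
  have h3A2 : (((3 • A₂ : Finset G)).card : ℝ) ≤ K ^ 3 * N := plun_aux hA1 h₁ hK0 h 3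
  have e1 : (2 • A₁ : Finset G) + A₁ = 3 • A₁ := (succ_nsmul A₁ 2).symm
  have e2 : A₂ + (2 • A₂ : Finset G) = 3 • A₂ := by
    rw [add_comm]; exact (succ_nsmul A₂ 2).symm
  -- Ruzsa triangle: |2A₁ + A₂| ≤ K⁴ N
  have t1 := Finset.ruzsa_triangle_inequality_add_add_add (2 • A₁ : Finset G) A₁ A₂
  rw [e1] at t1
  have t1' : (((2 • A₁ : Finset G) + A₂).card : ℝ) * N ≤
      (((3 • A₁ : Finset G)).card : ℝ) * ((A₁ + A₂).card : ℝ) := by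
    have := t1
    rw [h₁] at this
    exact_mod_cast this
  have h4 : (((2 • A₁ : Finset G) + A₂).card : ℝ) ≤ K ^ 4 * N := by
    have hb : (((3 • A₁ : Finset G)).card : ℝ) * ((A₁ + A₂).card : ℝ) ≤ (K ^ 3 * N) * (K * N) := by
      have hc1 : (0 : ℝ) ≤ ((3 • A₁ : Finset G)).card := Nat.cast_nonneg _
      have hc2 : (0 : ℝ) ≤ ((A₁ + A₂).card : ℝ) := Nat.cast_nonneg _
      exact mul_le_mul h3A1 h (by positivity) (by positivity)
    have := t1'.trans hb
    rw [show (K ^ 3 * N) * (K * N) = (K ^ 4 * N) * N by ring] at this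
    exact le_of_mul_le_mul_right this hN0
  -- Ruzsa triangle again: |2A₁ + 2A₂| ≤ K⁷ N
  have t2 := Finset.ruzsa_triangle_inequality_add_add_add (2 • A₁ : Finset G) A₂ (2 • A₂ : Finset G)
  rw [e2] at t2
  have t2' : (((2 • A₁ : Finset G) + 2 • A₂).card : ℝ) * N ≤
      (((2 • A₁ : Finset G) + A₂).card : ℝ) * (((3 • A₂ : Finset G)).card : ℝ) := by
    have := t2
    rw [h₂] at this
    exact_mod_cast this
  have eX : (A₁ + A₂) + (A₁ + A₂) = (2 • A₁ : Finset G) + 2 • A₂ := by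
    rw [two_nsmul, two_nsmul]
    exact add_add_add_comm A₁ A₂ A₁ A₂
  rw [eX]
  have hb : (((2 • A₁ : Finset G) + A₂).card : ℝ) * (((3 • A₂ : Finset G)).card : ℝ) ≤
      (K ^ 4 * N) * (K ^ 3 * N) := by
    exact mul_le_mul h4 h3A2 (Nat.cast_nonneg _) (by positivity)
  have := t2'.trans hb
  rw [show (K ^ 4 * N) * (K ^ 3 * N) = (K ^ 7 * N) * N by ring] at this
  exact le_of_mul_le_mul_right this hN0
end

section
/- Let $k \geq 2$, let $\mathcal{L}_2, \dots, \mathcal{L}_k \in \mathrm{GL}_d(\mathbb{R})$ be invertible linear maps, and let $A \subset \mathbb{R}^d$ be a finite non-empty set. Write $X = A + \mathcal{L}_2(A) + \dots + \mathcal{L}_k(A)$. If $|X| \leq K|A|$ for some $K \geq 1$, then $|X + \mathcal{L}_2(X) + \dots + \mathcal{L}_k(X)| \leq K^{7k+1}|A|$. -/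
open scoped Pointwise

set_option maxHeartbeats 1000000

open Finset in
private lemma aux_sum_nonempty {ι G : Type*} [AddCommGroup G] [DecidableEq G]
    (s : Finset ι) (f : ι → Finset G) (h : ∀ i ∈ s, (f i).Nonempty) :
    (∑ i ∈ s, f i).Nonempty := by
  classical
  induction s using Finset.induction_on with
  | empty => exact ⟨0, by simp⟩
  | @insert a s ha ih =>
      rw [Finset.sum_insert ha]
      exact (h a (mem_insert_self _ _)).add (ih fun i hi => h i (mem_insert_of_mem hi))

open Finset in
private lemma aux_sum_subset {ι G : Type*} [AddCommGroup G] [DecidableEq G]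
    (s : Finset ι) (f g : ι → Finset G) (h : ∀ i ∈ s, f i ⊆ g i) :
    ∑ i ∈ s, f i ⊆ ∑ i ∈ s, g i := by
  classical
  induction s using Finset.induction_on with
  | empty => simp
  | @insert a s ha ih =>
      rw [Finset.sum_insert ha, Finset.sum_insert ha]
      exact Finset.add_subset_add (h a (mem_insert_self _ _))
        (ih fun i hi => h i (mem_insert_of_mem hi))

open Finset in
private lemma aux_card_sum_le {ι G : Type*} [AddCommGroup G] [DecidableEq G]
    (s : Finset ι) (f : ι → Finset G) :
    (∑ i ∈ s, f i).card ≤ ∏ i ∈ s, (f i).card := by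
  classical
  induction s using Finset.induction_on with
  | empty => simp
  | @insert a s ha ih =>
      rw [Finset.sum_insert ha, Finset.prod_insert ha]
      exact (Finset.card_add_le).trans (Nat.mul_le_mul_left _ ih)

open Finset in
private lemma aux_sum_sub_sum {ι G : Type*} [AddCommGroup G] [DecidableEq G]
    (s : Finset ι) (f : ι → Finset G) :
    ∑ i ∈ s, (f i - f i) = (∑ i ∈ s, f i) - (∑ i ∈ s, f i) := by
  classical
  induction s using Finset.induction_on with
  | empty => simp
  | @insert a s ha ih =>
      rw [Finset.sum_insert ha, Finset.sum_insert ha, ih, sub_add_sub_comm]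

/-- If `X = A + 𝓛₂(A) + ⋯ + 𝓛_k(A)` satisfies `|X| ≤ K|A|`, then
`|X + 𝓛₂(X) + ⋯ + 𝓛_k(X)| ≤ K^(7k+1)|A|`.  Here `L 0` is the identity map, so
`∑ i, (L i)(A) = A + 𝓛₂(A) + ⋯ + 𝓛_k(A)`. -/
theorem stmt_5 (d k : ℕ) (hk : 2 ≤ k) [NeZero k]
    (L : Fin k → ((Fin d → ℝ) ≃ₗ[ℝ] (Fin d → ℝ)))
    (hL0 : L 0 = LinearEquiv.refl ℝ (Fin d → ℝ))
    (A : Finset (Fin d → ℝ)) (hA : A.Nonempty) (K : ℝ) (hK : 1 ≤ K)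
    (X : Finset (Fin d → ℝ)) (hX : X = ∑ i, A.image (L i))
    (h : (X.card : ℝ) ≤ K * A.card) :
    ((∑ i, X.image (L i)).card : ℝ) ≤ K ^ (7 * k + 1) * A.card := by
  classical
  open Finset in
  have hK0 : (0:ℝ) < K := lt_of_lt_of_le one_pos hK
  have hk1 : k ≠ 1 := by omega
  set B : Fin k → Finset (Fin d → ℝ) := fun i => A.image (L i) with hB
  have hBcard : ∀ i, (B i).card = A.card := fun i =>
    Finset.card_image_of_injective _ (L i).injective
  have hBne : ∀ i, (B i).Nonempty := fun i => hA.image _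
  have hB0 : B 0 = A := by
    rw [hB]
    simp only [hL0]
    ext x
    simp [LinearEquiv.refl_apply]
  have h1mem : (1 : Fin k) ∈ (Finset.univ.erase (0 : Fin k)) := by
    refine Finset.mem_erase.2 ⟨?_, Finset.mem_univ _⟩
    simpa [Fin.one_eq_zero_iff] using hk1
  set X' : Finset (Fin d → ℝ) := ∑ i ∈ Finset.univ.erase (0 : Fin k), B i with hX'
  have hX'ne : X'.Nonempty := aux_sum_nonempty _ _ fun i _ => hBne i
  have hXsplit : X = A + X' := by
    rw [hX, ← Finset.add_sum_erase _ B (Finset.mem_univ (0 : Fin k)), hB0, hX']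
  have ha0 : (0:ℝ) < A.card := by exact_mod_cast Finset.card_pos.2 hA
  have hX'0 : (0:ℝ) < X'.card := by exact_mod_cast Finset.card_pos.2 hX'ne
  have hAX' : ((A + X').card : ℝ) ≤ K * A.card := by rw [← hXsplit]; exact h
  -- |A| ≤ |X'|
  have haX' : (A.card : ℝ) ≤ X'.card := by
    have h1 : (B 1).card ≤ X'.card := by
      rw [hX', ← Finset.add_sum_erase _ B h1mem]
      exact Finset.card_le_card_add_right (aux_sum_nonempty _ _ fun i _ => hBne i)
    rw [← hBcard 1]; exact_mod_cast h1
  -- |A + B 1| ≤ K |A|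
  have hAB1 : ((A + B 1).card : ℝ) ≤ K * A.card := by
    have hsub : (A + B 1).card ≤ X.card := by
      rw [hXsplit, hX', ← Finset.add_sum_erase _ B h1mem, ← add_assoc]
      exact Finset.card_le_card_add_right (aux_sum_nonempty _ _ fun i _ => hBne i)
    exact le_trans (by exact_mod_cast hsub) h
  -- |A + A| ≤ K^2 |A|
  have hAA : ((A + A).card : ℝ) ≤ K ^ 2 * A.card := by
    have ht := Finset.ruzsa_triangle_inequality_add_add_add A (B 1) A
    have ht' : ((A + A).card : ℝ) * A.card ≤ (K * A.card) * (K * A.card) := by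
      have h2 : ((A + A).card : ℝ) * (B 1).card ≤ ((A + B 1).card : ℝ) * ((B 1 + A).card) := by
        exact_mod_cast ht
      rw [add_comm (B 1) A, hBcard 1] at h2
      exact h2.trans (mul_le_mul hAB1 hAB1 (by positivity) (by positivity))
    nlinarith [ha0]
  -- |3A| ≤ K^6 |A|
  have h3A : (((3:ℕ) • A).card : ℝ) ≤ K ^ 6 * A.card := by
    have hp := Finset.pluennecke_ruzsa_inequality_nsmul_add hA A 3
    have hp2 := (NNRat.cast_le (K := ℝ)).2 hp
    push_cast at hp2
    have hp' : (((3:ℕ) • A).card : ℝ) ≤ (((A + A).card : ℝ) / A.card) ^ 3 * A.card := hp2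
    have hr : (((A + A).card : ℝ) / A.card) ≤ K ^ 2 := by
      rw [div_le_iff₀ ha0]; exact hAA
    calc (((3:ℕ) • A).card : ℝ) ≤ (((A + A).card : ℝ) / A.card) ^ 3 * A.card := hp'
      _ ≤ (K ^ 2) ^ 3 * A.card :=
          mul_le_mul_of_nonneg_right
            (pow_le_pow_left₀ (div_nonneg (by positivity) ha0.le) hr 3) ha0.le
      _ = K ^ 6 * A.card := by ring
  -- |A + X| ≤ K^7 |A|
  have hAX : ((A + X).card : ℝ) ≤ K ^ 7 * A.card := by
    have hrw : A + X = (A + A) + X' := by rw [hXsplit, ← add_assoc]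
    have ht := Finset.ruzsa_triangle_inequality_add_add_add (A + A) A X'
    have h3 : (3:ℕ) • A = A + A + A := by
      rw [show (3:ℕ) = 2 + 1 from rfl, succ_nsmul, two_nsmul]
    have ht' : ((A + X).card : ℝ) * A.card ≤ (K ^ 6 * A.card) * (K * A.card) := by
      have h2 : (((A + A) + X').card : ℝ) * A.card ≤ (((A + A) + A).card : ℝ) * ((A + X').card)
        := by exact_mod_cast ht
      rw [← hrw, ← h3] at h2
      exact h2.trans (mul_le_mul h3A hAX' (by positivity) (by positivity))
    nlinarith [ha0]
  -- covering
  have hcov : ∀ j : Fin k, ∃ F, F ⊆ X.image (L j) ∧ ((F.card : ℝ) ≤ K ^ 7 ∧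
      X.image (L j) ⊆ F + (B j - B j)) := by
    intro j
    have himg : X.image (L j) + B j = (X + A).image (L j) := (Finset.image_add _).symm
    have hcard : ((X.image (L j) + B j).card : ℝ) ≤ K ^ 7 * (B j).card := by
      rw [himg, Finset.card_image_of_injective _ (L j).injective, hBcard, add_comm X A]
      exact hAX
    exact Finset.ruzsa_covering_add (hBne j) hcard
  choose F hF1 hF2 hF3 using hcov
  set T : Finset (Fin d → ℝ) := ∑ j ∈ Finset.univ.erase (0 : Fin k), F j with hT
  -- main inclusion
  have hYsub : (∑ i, X.image (L i)) ⊆ T + (X + (X' - X')) := by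
    have h0 : X.image (L 0) = X := by
      simp only [hL0]
      ext x
      simp [LinearEquiv.refl_apply]
    calc ∑ i, X.image (L i)
        = X + ∑ j ∈ Finset.univ.erase (0 : Fin k), X.image (L j) := by
          rw [← Finset.add_sum_erase _ (fun j => X.image (L j)) (Finset.mem_univ (0 : Fin k))]
          rw [h0]
      _ ⊆ X + ∑ j ∈ Finset.univ.erase (0 : Fin k), (F j + (B j - B j)) :=
          Finset.add_subset_add_left (aux_sum_subset _ _ _ fun j _ => hF3 j)
      _ = X + (T + (X' - X')) := by
          rw [Finset.sum_add_distrib, aux_sum_sub_sum, hT, hX']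
      _ = T + (X + (X' - X')) := add_left_comm _ _ _
  -- |T| ≤ (K^7)^(k-1)
  have hTcard : (T.card : ℝ) ≤ (K ^ 7) ^ (k - 1) := by
    have h1 : T.card ≤ ∏ j ∈ Finset.univ.erase (0 : Fin k), (F j).card := aux_card_sum_le _ _
    calc (T.card : ℝ) ≤ ∏ j ∈ Finset.univ.erase (0 : Fin k), ((F j).card : ℝ) := by
          push_cast
          exact_mod_cast h1
      _ ≤ ∏ _j ∈ Finset.univ.erase (0 : Fin k), K ^ 7 :=
          Finset.prod_le_prod (fun j _ => by positivity) (fun j _ => hF2 j)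
      _ = (K ^ 7) ^ (k - 1) := by
          rw [Finset.prod_const, Finset.card_erase_of_mem (Finset.mem_univ _),
            Finset.card_univ, Fintype.card_fin]
  -- |3X' - X'| ≤ K^4 |A|
  have hKX' : (((3:ℕ) • X' - (1:ℕ) • X').card : ℝ) ≤ K ^ 4 * A.card := by
    have hp := Finset.pluennecke_ruzsa_inequality_nsmul_sub_nsmul_add hA X' 3 1
    have hp2 := (NNRat.cast_le (K := ℝ)).2 hp
    push_cast at hp2
    have hp' : (((3:ℕ) • X' - (1:ℕ) • X').card : ℝ)
        ≤ (((A + X').card : ℝ) / A.card) ^ (3 + 1) * A.card := hp2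
    have hr : (((A + X').card : ℝ) / A.card) ≤ K := by rw [div_le_iff₀ ha0]; exact hAX'
    calc (((3:ℕ) • X' - (1:ℕ) • X').card : ℝ)
        ≤ (((A + X').card : ℝ) / A.card) ^ (3 + 1) * A.card := hp'
      _ ≤ K ^ (3 + 1) * A.card :=
          mul_le_mul_of_nonneg_right
            (pow_le_pow_left₀ (div_nonneg (by positivity) ha0.le) hr (3 + 1)) ha0.le
      _ = K ^ 4 * A.card := by norm_num
  -- |X + (X' - X')| ≤ K^5 |A|
  have hXW : ((X + (X' - X')).card : ℝ) ≤ K ^ 5 * A.card := by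
    have hrw : X + (X' - X') = A + ((2:ℕ) • X' - X') := by
      rw [hXsplit, add_assoc, ← add_sub_assoc, ← two_nsmul]
    have hrw2 : X' + ((2:ℕ) • X' - X') = (3:ℕ) • X' - (1:ℕ) • X' := by
      rw [← add_sub_assoc, one_nsmul]
      congr 1
      rw [show (3:ℕ) = 2 + 1 from rfl, succ_nsmul]
      exact add_comm _ _
    have ht := Finset.ruzsa_triangle_inequality_add_add_add A X' ((2:ℕ) • X' - X')
    have ht' : ((X + (X' - X')).card : ℝ) * X'.card ≤ (K * A.card) * (K ^ 4 * A.card) := by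
      have h2 : ((A + ((2:ℕ) • X' - X')).card : ℝ) * X'.card
          ≤ ((A + X').card : ℝ) * ((X' + ((2:ℕ) • X' - X')).card) := by exact_mod_cast ht
      rw [← hrw, hrw2] at h2
      exact h2.trans (mul_le_mul hAX' hKX' (by positivity) (by positivity))
    have hmul : ((X + (X' - X')).card : ℝ) * A.card ≤ (K * A.card) * (K ^ 4 * A.card) := by
      refine le_trans ?_ ht'
      exact mul_le_mul_of_nonneg_left haX' (by positivity)
    nlinarith [ha0]
  -- put everything together
  have hfin : ((∑ i, X.image (L i)).card : ℝ) ≤ (K ^ 7) ^ (k - 1) * (K ^ 5 * A.card) := by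
    have h1 : (∑ i, X.image (L i)).card ≤ (T + (X + (X' - X'))).card :=
      Finset.card_le_card hYsub
    have h2 : (T + (X + (X' - X'))).card ≤ T.card * (X + (X' - X')).card :=
      Finset.card_add_le
    calc ((∑ i, X.image (L i)).card : ℝ)
        ≤ (T.card : ℝ) * ((X + (X' - X')).card : ℝ) := by exact_mod_cast h1.trans h2
      _ ≤ (K ^ 7) ^ (k - 1) * (K ^ 5 * A.card) :=
          mul_le_mul hTcard hXW (by positivity) (by positivity)
  refine hfin.trans ?_
  have hexp : (K ^ 7) ^ (k - 1) * K ^ 5 = K ^ (7 * (k - 1) + 5) := by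
    rw [← pow_mul, ← pow_add]
  have hle : K ^ (7 * (k - 1) + 5) ≤ K ^ (7 * k + 1) := pow_le_pow_right₀ hK (by omega)
  calc (K ^ 7) ^ (k - 1) * (K ^ 5 * A.card) = K ^ (7 * (k - 1) + 5) * A.card := by
        rw [← mul_assoc, hexp]
    _ ≤ K ^ (7 * k + 1) * A.card := mul_le_mul_of_nonneg_right hle ha0.le
end

section
/- Let $k \in \mathbb{N}$, let $A_1, \dots, A_k \subset \mathbb{R}^d$ be finite non-empty sets, let $H \subseteq \mathbb{R}^d$ be a hyperplane containing $0$, and let $\vec{v} \in \mathbb{R}^d$ be a vector not parallel to $H$. Then $\mathcal{C}_{H,\vec{v}}(A_1 + \dots + A_k) \supseteq \mathcal{C}_{H,\vec{v}}(A_1) + \dots + \mathcal{C}_{H,\vec{v}}(A_k)$; in particular $|A_1 + \dots + A_k| \geq |\mathcal{C}_{H,\vec{v}}(A_1) + \dots + \mathcal{C}_{H,\vec{v}}(A_k)|$. -/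
open scoped Pointwise

/-- The fiber of `A` over `u` in the direction `v`: points of `A` lying on the line
through `u` with direction `v`. -/
def fiber {d : ℕ} (v : Fin d → ℝ) (A : Set (Fin d → ℝ)) (u : Fin d → ℝ) :
    Set (Fin d → ℝ) :=
  {a ∈ A | ∃ x : ℝ, a + x • v = u}

/-- The compression of `A` onto the hyperplane `H` with respect to `v`: its fiber over
each `u ∈ H` is `{u + n • v : 0 ≤ n ≤ |A_u| - 1}`. -/
noncomputable def compress {d : ℕ} (H : Submodule ℝ (Fin d → ℝ)) (v : Fin d → ℝ)
    (A : Set (Fin d → ℝ)) : Set (Fin d → ℝ) :=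
  {p | ∃ u ∈ H, ∃ n : ℕ, n < (fiber v A u).ncard ∧ p = u + (n : ℝ) • v}

/-!
If `n_i < |(A_i)_{u_i}|` with `u_i ∈ H`, the fiber of `A₁ + ⋯ + A_k` over `u₁ + ⋯ + u_k` contains
the sum of the fibers `(A_i)_{u_i}`. Parametrising the line `u + ℝ v` by `ℝ`, Cauchy–Davenport in
the linearly ordered group `ℝ` gives that fiber at least `∑ |(A_i)_{u_i}| - (k - 1) > ∑ n_i`
points, so `∑ (u_i + n_i v)` lies in the compression of the sumset. The cardinality bound
follows since the compression of a set `B` is in bijection with the pairs `(u, n)`, `u ∈ H`,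
`n < |B_u|`, and these inject into `B` because fibers over distinct points of `H` are disjoint.
-/

open Set

lemma Set.Finite.finsetSum {ι M : Type*} [AddCommMonoid M] (s : Finset ι) {X : ι → Set M}
    (h : ∀ i ∈ s, (X i).Finite) : (∑ i ∈ s, X i).Finite :=
  Finset.sum_induction _ Set.Finite (fun _ _ => .add) finite_zero h

section CauchyDavenport
variable {α : Type*} [LinearOrder α] [AddCommMonoid α] [IsOrderedCancelAddMonoid α]

lemma cauchy_davenport_ncard_of_linearOrder {X Y : Set α} (hX : X.Finite) (hY : Y.Finite)
    (hXne : X.Nonempty) (hYne : Y.Nonempty) : X.ncard + Y.ncard ≤ (X + Y).ncard + 1 := by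
  classical
  lift X to Finset α using hX
  lift Y to Finset α using hY
  rw [← Finset.coe_add, ncard_coe_finset, ncard_coe_finset, ncard_coe_finset]
  have := cauchy_davenport_add_of_linearOrder_isCancelAdd (Finset.coe_nonempty.1 hXne)
    (Finset.coe_nonempty.1 hYne)
  omega

lemma cauchy_davenport_finsetSum_ncard_of_linearOrder {ι : Type*} (s : Finset ι) (X : ι → Set α)
    (hfin : ∀ i ∈ s, (X i).Finite) (hne : ∀ i ∈ s, (X i).Nonempty) :
    ∑ i ∈ s, (X i).ncard + 1 ≤ (∑ i ∈ s, X i).ncard + s.card := by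
  classical
  induction s using Finset.induction with
  | empty => simp [← Set.singleton_zero]
  | insert j s hj ih =>
    simp only [Finset.forall_mem_insert] at hfin hne
    rw [Finset.sum_insert hj, Finset.sum_insert hj, Finset.card_insert_of_notMem hj]
    have hstep := cauchy_davenport_ncard_of_linearOrder hfin.1 (Finite.finsetSum s hfin.2) hne.1
      (Finset.sum_induction _ Set.Nonempty (fun _ _ => .add) zero_nonempty hne.2)
    have hih := ih hfin.2 hne.2
    omega

end CauchyDavenport

def lineSlice {K E : Type*} [Semiring K] [AddCommMonoid E] [Module K E] (v : E) (B : Set E)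
    (u : E) : Set K :=
  {x | u + x • v ∈ B}

lemma finsetSum_lineSlice_subset {K E ι : Type*} [Semiring K] [AddCommMonoid E] [Module K E]
    (v : E) (s : Finset ι) (A : ι → Set E) (u : ι → E) :
    ∑ i ∈ s, (lineSlice v (A i) (u i) : Set K) ⊆ lineSlice v (∑ i ∈ s, A i) (∑ i ∈ s, u i) := by
  intro _ hmem
  obtain ⟨x, hx, rfl⟩ := (mem_finsetSum _ _ _).1 hmem
  have hsum : ∑ i ∈ s, u i + (∑ i ∈ s, x i) • v = ∑ i ∈ s, (u i + x i • v) := by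
    rw [Finset.sum_smul, Finset.sum_add_distrib]
  show ∑ i ∈ s, u i + (∑ i ∈ s, x i) • v ∈ ∑ i ∈ s, A i
  rw [hsum]
  exact finsetSum_mem_finsetSum s A _ fun i hi => hx hi

section Field
variable {K E : Type*} [Field K] [AddCommGroup E] [Module K E] {v : E}

lemma lineSlice_finite (hv : v ≠ 0) {B : Set E} (hB : B.Finite) (u : E) :
    (lineSlice v B u : Set K).Finite :=
  hB.preimage ((add_right_injective u).comp (smul_left_injective K hv)).injOn

lemma eq_and_eq_of_add_smul_eq_add_smul {H : Submodule K E} (hv : v ∉ H) {u u' : E}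
    (hu : u ∈ H) (hu' : u' ∈ H) {x y : K} (h : u + x • v = u' + y • v) : u = u' ∧ x = y := by
  have hxy : x = y := by
    by_contra hne
    have hmem : (x - y) • v ∈ H := by
      rw [sub_smul, show x • v - y • v = u' - u by linear_combination (norm := module) h]
      exact H.sub_mem hu' hu
    exact hv ((H.smul_mem_iff (sub_ne_zero.2 hne)).1 hmem)
  subst hxy
  exact ⟨add_right_cancel h, rfl⟩

end Field

section Compression
variable {d : ℕ} {H : Submodule ℝ (Fin d → ℝ)} {v : Fin d → ℝ}

lemma fiber_eq_image_lineSlice (B : Set (Fin d → ℝ)) (u : Fin d → ℝ) :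
    fiber v B u = (fun x : ℝ => u + x • v) '' lineSlice v B u := by
  ext a
  constructor
  · rintro ⟨ha, x, rfl⟩
    exact ⟨-x, by simpa [lineSlice] using ha, by module⟩
  · rintro ⟨x, hx, rfl⟩
    exact ⟨hx, -x, by module⟩

lemma ncard_fiber_eq_ncard_lineSlice (hv : v ≠ 0) (B : Set (Fin d → ℝ)) (u : Fin d → ℝ) :
    (fiber v B u).ncard = (lineSlice v B u : Set ℝ).ncard := by
  rw [fiber_eq_image_lineSlice]
  exact ((add_right_injective u).comp (smul_left_injective ℝ hv)).injOn.ncard_image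

lemma eq_of_mem_fiber_of_mem_fiber (hv : v ∉ H) {B B' : Set (Fin d → ℝ)} {u u' a : Fin d → ℝ}
    (hu : u ∈ H) (hu' : u' ∈ H) (ha : a ∈ fiber v B u) (ha' : a ∈ fiber v B' u') : u = u' := by
  obtain ⟨-, x, rfl⟩ := ha
  obtain ⟨-, y, rfl⟩ := ha'
  exact (eq_and_eq_of_add_smul_eq_add_smul (x := -x) (y := -y) hv hu hu' (by module)).1

def compressIndex (H : Submodule ℝ (Fin d → ℝ)) (v : Fin d → ℝ) (B : Set (Fin d → ℝ)) :
    Set ((Fin d → ℝ) × ℕ) :=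
  {p | p.1 ∈ H ∧ p.2 < (fiber v B p.1).ncard}

lemma compress_eq_image_compressIndex (B : Set (Fin d → ℝ)) :
    compress H v B = (fun p => p.1 + (p.2 : ℝ) • v) '' compressIndex H v B := by
  ext p
  simp [compress, compressIndex, eq_comm, and_assoc]

lemma injOn_compressIndex (hv : v ∉ H) (B : Set (Fin d → ℝ)) :
    InjOn (fun p : (Fin d → ℝ) × ℕ => p.1 + (p.2 : ℝ) • v) (compressIndex H v B) := by
  rintro ⟨u, m⟩ ⟨hu, -⟩ ⟨u', n⟩ ⟨hu', -⟩ h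
  obtain ⟨rfl, hmn⟩ := eq_and_eq_of_add_smul_eq_add_smul hv hu hu' h
  exact Prod.ext rfl (Nat.cast_injective hmn)

lemma exists_injOn_compressIndex (hv : v ∉ H) {B : Set (Fin d → ℝ)} (hB : B.Finite) :
    ∃ f : (Fin d → ℝ) × ℕ → Fin d → ℝ,
      MapsTo f (compressIndex H v B) B ∧ InjOn f (compressIndex H v B) := by
  have hfiber : ∀ u, ∃ e : ℕ → Fin d → ℝ, Iio (fiber v B u).ncard ⊆ e ⁻¹' fiber v B u ∧
      InjOn e (Iio (fiber v B u).ncard) := fun u =>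
    (finite_Iio _).exists_injOn_of_encard_le <| by
      rw [← (finite_Iio _).cast_ncard_eq, ← (hB.subset fun _ ha => ha.1).cast_ncard_eq,
        ncard_Iio_nat]
  choose e he_mem he_inj using hfiber
  refine ⟨fun p => e p.1 p.2, fun p hp => (he_mem p.1 hp.2).1, ?_⟩
  rintro ⟨u, m⟩ ⟨hu, hm⟩ ⟨u', n⟩ ⟨hu', hn⟩ (h : e u m = e u' n)
  have hmem : e u m ∈ fiber v B u' := h ▸ he_mem u' hn
  obtain rfl := eq_of_mem_fiber_of_mem_fiber hv hu hu' (he_mem u hm) hmem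
  exact Prod.ext rfl (he_inj u hm hn h)

lemma compress_finite (hv : v ∉ H) {B : Set (Fin d → ℝ)} (hB : B.Finite) :
    (compress H v B).Finite := by
  obtain ⟨f, hf_maps, hf_inj⟩ := exists_injOn_compressIndex hv hB
  rw [compress_eq_image_compressIndex]
  exact ((hB.subset hf_maps.image_subset).of_finite_image hf_inj).image _

lemma ncard_compress_le (hv : v ∉ H) {B : Set (Fin d → ℝ)} (hB : B.Finite) :
    (compress H v B).ncard ≤ B.ncard := by
  obtain ⟨f, hf_maps, hf_inj⟩ := exists_injOn_compressIndex hv hB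
  rw [compress_eq_image_compressIndex, (injOn_compressIndex hv B).ncard_image]
  exact ncard_le_ncard_of_injOn f hf_maps hf_inj hB

lemma finsetSum_compress_subset_compress_finsetSum (hv : v ∉ H) {ι : Type*} (s : Finset ι)
    (A : ι → Set (Fin d → ℝ)) (hfin : ∀ i ∈ s, (A i).Finite) :
    ∑ i ∈ s, compress H v (A i) ⊆ compress H v (∑ i ∈ s, A i) := by
  have hv0 : v ≠ 0 := fun h => hv (h ▸ H.zero_mem)
  intro _ hp
  obtain ⟨g, hg, rfl⟩ := (mem_finsetSum _ _ _).1 hp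
  choose! u hu n hn hg_eq using fun i (hi : i ∈ s) => hg hi
  refine ⟨∑ i ∈ s, u i, H.sum_mem hu, ∑ i ∈ s, n i, ?_, ?_⟩
  · simp only [ncard_fiber_eq_ncard_lineSlice hv0] at hn ⊢
    have hne : ∀ i ∈ s, (lineSlice v (A i) (u i) : Set ℝ).Nonempty := fun i hi =>
      nonempty_of_ncard_ne_zero (Nat.ne_zero_of_lt (hn i hi))
    have hcard : ∑ i ∈ s, n i + 1 + s.card ≤
        (lineSlice v (∑ i ∈ s, A i) (∑ i ∈ s, u i) : Set ℝ).ncard + s.card :=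
      calc ∑ i ∈ s, n i + 1 + s.card = ∑ i ∈ s, (n i + 1) + 1 := by
            rw [Finset.sum_add_distrib, Finset.card_eq_sum_ones]; ring
        _ ≤ ∑ i ∈ s, (lineSlice v (A i) (u i) : Set ℝ).ncard + 1 := by
            gcongr with i hi; exact hn i hi
        _ ≤ (∑ i ∈ s, (lineSlice v (A i) (u i) : Set ℝ)).ncard + s.card :=
            cauchy_davenport_finsetSum_ncard_of_linearOrder s _
              (fun i hi => lineSlice_finite hv0 (hfin i hi) _) hne
        _ ≤ _ := Nat.add_le_add_right (ncard_le_ncard (finsetSum_lineSlice_subset v s A u)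
              (lineSlice_finite hv0 (Finite.finsetSum s hfin) _)) _
    omega
  · rw [Finset.sum_congr rfl hg_eq, Finset.sum_add_distrib, ← Finset.sum_smul, Nat.cast_sum]

end Compression

theorem stmt_6_general (d k : ℕ) (A : Fin k → Set (Fin d → ℝ))
    (hfin : ∀ i, (A i).Finite)
    (H : Submodule ℝ (Fin d → ℝ))
    (v : Fin d → ℝ) (hv : v ∉ H) :
    (∑ i, compress H v (A i)) ⊆ compress H v (∑ i, A i) ∧
    (∑ i, compress H v (A i)).ncard ≤ (∑ i, A i).ncard := by
  have hsub := finsetSum_compress_subset_compress_finsetSum hv Finset.univ A fun i _ => hfin i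
  have hsum_fin := Set.Finite.finsetSum Finset.univ fun i _ => hfin i
  exact ⟨hsub, (ncard_le_ncard hsub (compress_finite hv hsum_fin)).trans
    (ncard_compress_le hv hsum_fin)⟩

/-- Compressions do not increase sumsets:
`𝓒(A₁) + ⋯ + 𝓒(A_k) ⊆ 𝓒(A₁ + ⋯ + A_k)`, and in particular
`|𝓒(A₁) + ⋯ + 𝓒(A_k)| ≤ |A₁ + ⋯ + A_k|`. -/
theorem stmt_6 (d k : ℕ) (A : Fin k → Set (Fin d → ℝ))
    (hfin : ∀ i, (A i).Finite) (hne : ∀ i, (A i).Nonempty)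
    (H : Submodule ℝ (Fin d → ℝ)) (hH : Module.finrank ℝ H = d - 1)
    (v : Fin d → ℝ) (hv : v ∉ H) :
    (∑ i, compress H v (A i)) ⊆ compress H v (∑ i, A i) ∧
    (∑ i, compress H v (A i)).ncard ≤ (∑ i, A i).ncard :=
  stmt_6_general d k A hfin H v hv
end

section
/- Let $k \geq 2$ and let $A_1, \dots, A_k \subseteq \mathbb{R}^2$ be finite non-empty sets, and let $l$ be a line in $\mathbb{R}^2$. For each $i$, let $r_i$ be the minimal number of translates of $l$ required to cover $A_i$. Then $|A_1 + \dots + A_k| \geq \left(\frac{|A_1|}{r_1} + \dots + \frac{|A_k|}{r_k} - (k-1)\right)\left(r_1 + \dots + r_k - (k-1)\right)$. -/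
/-!
An injective additive map of the plane sending the translates of `l` to vertical lines turns the
covering number `rᵢ` into `ρᵢ`, the number of distinct first coordinates of the image `Bᵢ` of `Aᵢ`.
We induct on `∑ ρᵢ`. When every `ρᵢ = 1` all the sets lie on vertical lines and the bound is the
`k`-fold Cauchy–Davenport inequality. Otherwise, let `Tᵢ` be the rightmost column of `Bᵢ`. For any
`i₀` with `ρᵢ₀ ≥ 2`, the sum `∑ Tᵢ` lies on one vertical line, strictly to the right of the sum
obtained by replacing `Bᵢ₀` with `Bᵢ₀ \ Tᵢ₀`, and has at least `∑ |Tᵢ| - (k - 1)` elements; so the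
induction hypothesis for the smaller family gains this much. An averaging argument over the
weights `ρᵢ - 1` chooses `i₀` so that this gain makes up for the change of the bound.
-/

open scoped Pointwise
open Finset

namespace Finset

variable {ι α : Type*}

theorem sum_nonempty [DecidableEq α] [AddCommMonoid α] (s : Finset ι) {F : ι → Finset α}
    (hF : ∀ i ∈ s, (F i).Nonempty) :
    (∑ i ∈ s, F i).Nonempty := by
  induction s using Finset.cons_induction with
  | empty => simp
  | cons a s ha ih =>
    rw [sum_cons]
    exact (hF a (mem_cons_self a s)).add (ih fun i hi ↦ hF i (mem_cons_of_mem hi))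

theorem mem_fintype_sum [DecidableEq α] [AddCommMonoid α] [Fintype ι] {F : ι → Finset α}
    {z : α} :
    z ∈ ∑ i, F i ↔ ∃ g : ι → α, (∀ i, g i ∈ F i) ∧ ∑ i, g i = z := by
  rw [← mem_coe, coe_sum, Set.mem_fintype_sum]
  simp

theorem image_sum {β : Type*} [DecidableEq α] [AddCommMonoid α] [DecidableEq β]
    [AddCommMonoid β] (s : Finset ι)
    (F : ι → Finset α) (e : α →+ β) : (∑ i ∈ s, F i).image e = ∑ i ∈ s, (F i).image e :=
  map_sum (imageAddMonoidHom e) F s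

theorem sum_card_add_one_le_card_sum_add_card [AddCommMonoid α] [LinearOrder α]
    [IsOrderedCancelAddMonoid α] (s : Finset ι) {D : ι → Finset α} (hD : ∀ i ∈ s, (D i).Nonempty) :
    ∑ i ∈ s, #(D i) + 1 ≤ #(∑ i ∈ s, D i) + #s := by
  induction s using Finset.cons_induction with
  | empty => simp
  | cons a s ha ih =>
    have hs : ∀ i ∈ s, (D i).Nonempty := fun i hi ↦ hD i (mem_cons_of_mem hi)
    rw [sum_cons, sum_cons, card_cons]
    have hCD := cauchy_davenport_add_of_linearOrder_isCancelAdd (hD a (mem_cons_self a s))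
      (sum_nonempty s hs)
    have := ih hs
    omega

end Finset

theorem sum_card_add_one_le_card_sum_add_card_of_card_image_fst_le_one {ι α β : Type*}
    [Fintype ι] [AddCommMonoid α] [DecidableEq α] [AddCommMonoid β] [LinearOrder β]
    [IsOrderedCancelAddMonoid β] {T : ι → Finset (α × β)} (hT : ∀ i, (T i).Nonempty)
    (hfst : ∀ i, #((T i).image Prod.fst) ≤ 1) :
    ∑ i, #(T i) + 1 ≤ #(∑ i, T i) + Fintype.card ι := by
  have hsnd : ∀ i, #((T i).image Prod.snd) = #(T i) := fun i ↦
    card_image_of_injOn fun p hp q hq hpq ↦ Prod.ext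
      (card_le_one.1 (hfst i) _ (mem_image_of_mem _ hp) _ (mem_image_of_mem _ hq)) hpq
  have hCD := sum_card_add_one_le_card_sum_add_card univ (D := fun i ↦ (T i).image Prod.snd)
    fun i _ ↦ (hT i).image _
  have hproj : #(∑ i, (T i).image Prod.snd) ≤ #(∑ i, T i) := by
    simpa using (image_sum univ T (AddMonoidHom.snd α β)).symm ▸ card_image_le
  simp only [hsnd, card_univ] at hCD
  omega

section TopFibre

variable {α β : Type*} [LinearOrder α]

def topFibre (B : Finset (α × β)) : Finset (α × β) :=
  B.filter fun p ↦ ∀ q ∈ B, q.1 ≤ p.1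

theorem topFibre_subset (B : Finset (α × β)) : topFibre B ⊆ B := filter_subset _ _

theorem topFibre_nonempty {B : Finset (α × β)} (hB : B.Nonempty) : (topFibre B).Nonempty := by
  obtain ⟨p, hp, hmax⟩ := exists_max_image B Prod.fst hB
  exact ⟨p, mem_filter.2 ⟨hp, hmax⟩⟩

theorem card_image_fst_topFibre_le_one (B : Finset (α × β)) :
    #((topFibre B).image Prod.fst) ≤ 1 := by
  simp only [card_le_one, mem_image, topFibre, mem_filter]
  rintro _ ⟨p, ⟨hp, hpmax⟩, rfl⟩ _ ⟨q, ⟨hq, hqmax⟩, rfl⟩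
  exact le_antisymm (hqmax p hp) (hpmax q hq)

theorem topFibre_eq_self {B : Finset (α × β)} (hB : #(B.image Prod.fst) ≤ 1) :
    topFibre B = B :=
  filter_true_of_mem fun _ hp _ hq ↦
    (card_le_one.1 hB _ (mem_image_of_mem _ hq) _ (mem_image_of_mem _ hp)).le

theorem card_image_fst_sdiff_topFibre_add_one [DecidableEq β] {B : Finset (α × β)}
    (hB : B.Nonempty) : #((B \ topFibre B).image Prod.fst) + 1 = #(B.image Prod.fst) := by
  have himage : (B \ topFibre B).image Prod.fst =
      B.image Prod.fst \ (topFibre B).image Prod.fst := by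
    ext x
    simp only [mem_image, mem_sdiff, topFibre, mem_filter]
    constructor
    · rintro ⟨p, ⟨hp, hpmax⟩, rfl⟩
      exact ⟨⟨p, hp, rfl⟩, fun ⟨q, ⟨_, hqmax⟩, hqp⟩ ↦ hpmax ⟨hp, hqp ▸ hqmax⟩⟩
    · rintro ⟨⟨p, hp, rfl⟩, hx⟩
      exact ⟨p, ⟨hp, fun hpmax ↦ hx ⟨p, hpmax, rfl⟩⟩, rfl⟩
  have hone : #((topFibre B).image Prod.fst) = 1 :=
    le_antisymm (card_image_fst_topFibre_le_one B) ((topFibre_nonempty hB).image _).card_pos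
  have hle := card_le_card (image_subset_image (s₂ := B) (f := Prod.fst) (topFibre_subset B))
  rw [himage, card_sdiff_of_subset (image_subset_image (topFibre_subset B))]
  omega

theorem update_sdiff_topFibre_subset {ι : Type*} [DecidableEq ι] [DecidableEq β]
    (B : ι → Finset (α × β)) (i₀ i : ι) :
    Function.update B i₀ (B i₀ \ topFibre (B i₀)) i ⊆ B i := by
  rcases eq_or_ne i i₀ with rfl | hi
  · simp [sdiff_subset]
  · simp [hi]

end TopFibre

theorem Fintype.sum_apply_update_add {ι κ γ : Type*} [Fintype ι] [DecidableEq ι]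
    [AddCommMonoid γ] (F : κ → γ) (B : ι → κ) (i : ι) (b : κ) :
    ∑ j, F (Function.update B i b j) + F (B i) = ∑ j, F (B j) + F b := by
  simp only [Function.apply_update (fun _ ↦ F), sum_update_of_mem (mem_univ i),
    sum_eq_add_sum_sdiff_singleton_of_mem (mem_univ i) (fun j ↦ F (B j))]
  abel

theorem exists_mul_sum_le_mul_sum {ι : Type*} (s : Finset ι) (w δ : ι → ℝ)
    (hδ : ∀ i ∈ s, w i = 0 → δ i = 0) (hw : ∃ i ∈ s, w i ≠ 0) :
    ∃ i ∈ s, w i ≠ 0 ∧ δ i * ∑ j ∈ s, w j ≤ w i * ∑ j ∈ s, δ j := by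
  classical
  have hP : (s.filter (w · ≠ 0)).Nonempty := by
    obtain ⟨i, hi, hwi⟩ := hw
    exact ⟨i, mem_filter.2 ⟨hi, hwi⟩⟩
  have hsum : ∑ i ∈ s.filter (w · ≠ 0), δ i * ∑ j ∈ s, w j
      = ∑ i ∈ s.filter (w · ≠ 0), w i * ∑ j ∈ s, δ j := by
    rw [← sum_mul, ← sum_mul, sum_filter_ne_zero,
      sum_filter_of_ne fun i hi hδi ↦ mt (hδ i hi) hδi, mul_comm]
  obtain ⟨i, hi, hle⟩ := exists_le_of_sum_le hP hsum.le
  exact ⟨i, (mem_filter.1 hi).1, (mem_filter.1 hi).2, hle⟩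

section GrynkiewiczSerra

variable {ι α β : Type*} [Fintype ι] [AddCommMonoid α] [LinearOrder α] [AddCommMonoid β]
  [LinearOrder β]

theorem disjoint_sum_sum_topFibre [IsOrderedCancelAddMonoid α] {B B' : ι → Finset (α × β)}
    (hB' : ∀ i, B' i ⊆ B i) {i₀ : ι} (hi₀ : Disjoint (B' i₀) (topFibre (B i₀))) :
    Disjoint (∑ i, B' i) (∑ i, topFibre (B i)) := by
  rw [disjoint_left]
  rintro _ hz hz'
  obtain ⟨g, hg, rfl⟩ := mem_fintype_sum.1 hz
  obtain ⟨t, ht, hgt⟩ := mem_fintype_sum.1 hz'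
  have hle : ∀ i, (g i).1 ≤ (t i).1 := fun i ↦ (mem_filter.1 (ht i)).2 _ (hB' i (hg i))
  have hlt : (g i₀).1 < (t i₀).1 := by
    refine lt_of_not_ge fun hge ↦ disjoint_left.1 hi₀ (hg i₀) (mem_filter.2 ⟨hB' i₀ (hg i₀), ?_⟩)
    exact fun q hq ↦ ((mem_filter.1 (ht i₀)).2 q hq).trans hge
  refine (sum_lt_sum (fun i _ ↦ hle i) ⟨i₀, mem_univ _, hlt⟩).ne ?_
  rw [← Prod.fst_sum, ← Prod.fst_sum, hgt]

theorem card_sum_add_sum_card_topFibre_add_one_le [IsOrderedCancelAddMonoid α]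
    [IsOrderedCancelAddMonoid β] {B B' : ι → Finset (α × β)}
    (hB : ∀ i, (B i).Nonempty) (hB' : ∀ i, B' i ⊆ B i) {i₀ : ι}
    (hi₀ : Disjoint (B' i₀) (topFibre (B i₀))) :
    #(∑ i, B' i) + ∑ i, #(topFibre (B i)) + 1 ≤ #(∑ i, B i) + Fintype.card ι := by
  have hunion : #(∑ i, B' i) + #(∑ i, topFibre (B i)) ≤ #(∑ i, B i) := by
    rw [← card_union_of_disjoint (disjoint_sum_sum_topFibre hB' hi₀)]
    exact card_le_card (union_subset (sum_le_sum fun i _ ↦ hB' i)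
      (sum_le_sum fun i _ ↦ topFibre_subset (B i)))
  have hfibre := sum_card_add_one_le_card_sum_add_card_of_card_image_fst_le_one
    (fun i ↦ topFibre_nonempty (hB i)) fun i ↦ card_image_fst_topFibre_le_one (B i)
  omega

/-- `ρᵢ = #((B i).image Prod.fst)` plays the role of `rᵢ`: it is the number of vertical lines
needed to cover `Bᵢ`. -/
noncomputable def grynkiewiczSerraBound (B : ι → Finset (α × β)) : ℝ :=
  (∑ i, (#(B i) : ℝ) / #((B i).image Prod.fst) - (Fintype.card ι - 1)) *
    (∑ i, (#((B i).image Prod.fst) : ℝ) - (Fintype.card ι - 1))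

theorem grynkiewiczSerraBound_le_of_card_image_fst_le_one [IsOrderedCancelAddMonoid β]
    {B : ι → Finset (α × β)} (hB : ∀ i, (B i).Nonempty)
    (hρ : ∀ i, #((B i).image Prod.fst) ≤ 1) :
    grynkiewiczSerraBound B ≤ #(∑ i, B i) := by
  have hρ₁ : ∀ i, #((B i).image Prod.fst) = 1 := fun i ↦
    le_antisymm (hρ i) ((hB i).image _).card_pos
  have hCD : (∑ i, (#(B i) : ℝ)) + 1 ≤ #(∑ i, B i) + Fintype.card ι := by
    exact_mod_cast sum_card_add_one_le_card_sum_add_card_of_card_image_fst_le_one hB hρ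
  simp only [grynkiewiczSerraBound, hρ₁, Nat.cast_one, div_one, sum_const, card_univ,
    nsmul_eq_mul, mul_one]
  linarith

end GrynkiewiczSerra

theorem grynkiewiczSerra_step_arith {E R X X' S b t ρ k : ℝ} (hρ : 1 < ρ)
    (hIH : (E - b / ρ + (b - t) / (ρ - 1) - (k - 1)) * (R - 1 - (k - 1)) ≤ X')
    (hgeom : X' + S + 1 ≤ X + k) (hkey : (t - b / ρ) * (R - k) ≤ (ρ - 1) * (S - E)) :
    (E - (k - 1)) * (R - (k - 1)) ≤ X := by
  have hρ₁ : 0 < ρ - 1 := sub_pos.2 hρ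
  have hD : (b - t) / (ρ - 1) - b / ρ = -((t - b / ρ) / (ρ - 1)) := by
    field_simp
    ring
  have hkey' : (t - b / ρ) / (ρ - 1) * (R - k) ≤ S - E := by
    rw [div_mul_eq_mul_div, div_le_iff₀ hρ₁, mul_comm _ (ρ - 1)]
    exact hkey
  linear_combination hgeom + hIH + hkey' - (R - k) * hD

section GrynkiewiczSerraStep

variable {ι α β : Type*} [Fintype ι] [DecidableEq ι] [AddCommMonoid α] [LinearOrder α]
  [IsOrderedCancelAddMonoid α] [AddCommMonoid β] [LinearOrder β] [IsOrderedCancelAddMonoid β]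

theorem grynkiewiczSerraBound_le_of_update_sdiff_topFibre {B : ι → Finset (α × β)}
    (hB : ∀ i, (B i).Nonempty) {i₀ : ι} (hi₀ : 2 ≤ #((B i₀).image Prod.fst))
    (hkey : ((#(topFibre (B i₀)) : ℝ) - #(B i₀) / #((B i₀).image Prod.fst)) *
        ∑ i, ((#((B i).image Prod.fst) : ℝ) - 1) ≤
      ((#((B i₀).image Prod.fst) : ℝ) - 1) *
        ∑ i, ((#(topFibre (B i)) : ℝ) - #(B i) / #((B i).image Prod.fst)))
    (hIH : grynkiewiczSerraBound (Function.update B i₀ (B i₀ \ topFibre (B i₀))) ≤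
      #(∑ i, Function.update B i₀ (B i₀ \ topFibre (B i₀)) i)) :
    grynkiewiczSerraBound B ≤ #(∑ i, B i) := by
  set B' := B i₀ \ topFibre (B i₀)
  have hcard : (#B' : ℝ) = #(B i₀) - #(topFibre (B i₀)) := by
    rw [eq_sub_iff_add_eq]
    exact_mod_cast card_sdiff_add_card_eq_card (topFibre_subset _)
  have hρ' : (#(B'.image Prod.fst) : ℝ) = #((B i₀).image Prod.fst) - 1 := by
    rw [eq_sub_iff_add_eq]
    exact_mod_cast card_image_fst_sdiff_topFibre_add_one (hB i₀)
  have hE := Fintype.sum_apply_update_add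
    (fun s : Finset (α × β) ↦ (#s : ℝ) / #(s.image Prod.fst)) B i₀ B'
  have hR := Fintype.sum_apply_update_add
    (fun s : Finset (α × β) ↦ (#(s.image Prod.fst) : ℝ)) B i₀ B'
  simp only [hcard, hρ'] at hE hR
  have hgeom : (#(∑ i, Function.update B i₀ B' i) : ℝ) + ∑ i, (#(topFibre (B i)) : ℝ) + 1 ≤
      #(∑ i, B i) + Fintype.card ι := by
    exact_mod_cast card_sum_add_sum_card_topFibre_add_one_le (i₀ := i₀) hB
      (update_sdiff_topFibre_subset B i₀) (by simpa using (sdiff_disjoint : Disjoint B' _))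
  rw [grynkiewiczSerraBound, eq_sub_of_add_eq hE, eq_sub_of_add_eq hR] at hIH
  rw [sum_sub_distrib, sum_sub_distrib, sum_const, card_univ, nsmul_one] at hkey
  refine grynkiewiczSerra_step_arith (by exact_mod_cast hi₀) ?_ hgeom hkey
  linarith

end GrynkiewiczSerraStep

theorem grynkiewiczSerraBound_le_card_sum {ι α β : Type*} [Fintype ι] [AddCommMonoid α]
    [LinearOrder α] [IsOrderedCancelAddMonoid α] [AddCommMonoid β] [LinearOrder β]
    [IsOrderedCancelAddMonoid β] {B : ι → Finset (α × β)} (hB : ∀ i, (B i).Nonempty) :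
    grynkiewiczSerraBound B ≤ #(∑ i, B i) := by
  classical
  induction hN : ∑ i, #((B i).image Prod.fst) using Nat.strong_induction_on generalizing B with
  | _ N IH =>
  by_cases hρ : ∀ i, #((B i).image Prod.fst) ≤ 1
  · exact grynkiewiczSerraBound_le_of_card_image_fst_le_one hB hρ
  have hρ₁ : ∀ i, 1 ≤ #((B i).image Prod.fst) := fun i ↦ ((hB i).image _).card_pos
  obtain ⟨i₀, -, hi₀, hkey⟩ := exists_mul_sum_le_mul_sum univ
    (fun i ↦ (#((B i).image Prod.fst) : ℝ) - 1)
    (fun i ↦ (#(topFibre (B i)) : ℝ) - #(B i) / #((B i).image Prod.fst))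
    (fun i _ hi ↦ by
      have hi : #((B i).image Prod.fst) = 1 := by exact_mod_cast sub_eq_zero.1 hi
      simp [topFibre_eq_self hi.le, hi])
    (by
      obtain ⟨i, hi⟩ := not_forall.1 hρ
      exact ⟨i, mem_univ i, sub_ne_zero.2 (by exact_mod_cast (lt_of_not_ge hi).ne')⟩)
  have hi₀ : 2 ≤ #((B i₀).image Prod.fst) := by
    have : #((B i₀).image Prod.fst) ≠ 1 := fun h ↦ hi₀ (by simp [h])
    have := hρ₁ i₀
    omega
  have hB' := card_image_fst_sdiff_topFibre_add_one (hB i₀)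
  refine grynkiewiczSerraBound_le_of_update_sdiff_topFibre hB hi₀ hkey (IH _ ?_ (fun i ↦ ?_) rfl)
  · have := Fintype.sum_apply_update_add (fun s : Finset (α × β) ↦ #(s.image Prod.fst)) B i₀
      (B i₀ \ topFibre (B i₀))
    omega
  · rcases eq_or_ne i i₀ with rfl | hi
    · rw [Function.update_self, ← image_nonempty (f := Prod.fst), ← card_pos]
      omega
    · simpa [hi] using hB i

theorem isLeast_card_image_of_eq_setOf {G H : Type*} [AddCommGroup G] [AddGroup H]
    [DecidableEq H] (φ : G →+ H) (A : Finset G) {l : Set G} {a : G} (hl : l = {x | φ x = φ a}) :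
    IsLeast {n : ℕ | ∃ c : Fin n → G, (A : Set G) ⊆ ⋃ j, c j +ᵥ l} #(A.image φ) := by
  subst hl
  constructor
  · obtain ⟨u, huA, hinj, hu⟩ := exists_subset_injOn_image_eq_of_surjOn (A : Set G) (A.image φ)
      fun y hy ↦ by simpa using hy
    rw [← hu, card_image_of_injOn hinj]
    refine ⟨fun j ↦ (u.equivFin.symm j : G) - a, fun x hx ↦ ?_⟩
    obtain ⟨y, hy, hyx⟩ := mem_image.1 (hu ▸ mem_image_of_mem φ hx : φ x ∈ u.image φ)
    refine Set.mem_iUnion.2 ⟨u.equivFin ⟨y, hy⟩, x - y + a, ?_, ?_⟩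
    · simp [hyx]
    · simp only [Equiv.symm_apply_apply, vadd_eq_add]
      abel
  · rintro n ⟨c, hc⟩
    calc #(A.image φ) ≤ #((univ : Finset (Fin n)).image fun j ↦ φ (c j) + φ a) := by
          refine card_le_card fun y hy ↦ ?_
          obtain ⟨x, hx, rfl⟩ := mem_image.1 hy
          obtain ⟨j, hj⟩ := Set.mem_iUnion.1 (hc hx)
          obtain ⟨z, hz, rfl⟩ := hj
          exact mem_image.2 ⟨j, mem_univ j, by simp [show φ z = φ a from hz]⟩
      _ ≤ n := card_image_le.trans (card_fin n).le

section Plane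

open Matrix

def perpDot (w : Fin 2 → ℝ) : (Fin 2 → ℝ) →+ ℝ :=
  AddMonoidHom.mk' (fun x ↦ x 0 * w 1 - x 1 * w 0) fun x y ↦ by simp only [Pi.add_apply]; ring

def dotProductAddHom (w : Fin 2 → ℝ) : (Fin 2 → ℝ) →+ ℝ :=
  AddMonoidHom.mk' (· ⬝ᵥ w) fun x y ↦ add_dotProduct x y w

theorem dotProduct_self_smul_eq (w u : Fin 2 → ℝ) :
    (w ⬝ᵥ w) • u = (u ⬝ᵥ w) • w + perpDot w u • ![w 1, -w 0] := by
  ext j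
  fin_cases j <;> simp [perpDot, dotProduct, Fin.sum_univ_two] <;> ring

theorem perpDot_injective_prod {w : Fin 2 → ℝ} (hw : w ≠ 0) :
    Function.Injective ((perpDot w).prod (dotProductAddHom w)) := by
  refine (injective_iff_map_eq_zero _).2 fun u hu ↦ ?_
  have h := dotProduct_self_smul_eq w u
  simp only [AddMonoidHom.prod_apply, Prod.mk_eq_zero] at hu
  simp only [dotProductAddHom, AddMonoidHom.mk'_apply] at hu
  rw [hu.1, hu.2, zero_smul, zero_smul, add_zero] at h
  exact (smul_eq_zero.1 h).resolve_left (mt dotProduct_self_eq_zero.1 hw)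

theorem setOf_eq_add_smul_eq {w : Fin 2 → ℝ} (hw : w ≠ 0) (a : Fin 2 → ℝ) :
    {x | ∃ t : ℝ, x = a + t • w} = {x | perpDot w x = perpDot w a} := by
  have hww : w ⬝ᵥ w ≠ 0 := mt dotProduct_self_eq_zero.1 hw
  ext x
  constructor
  · rintro ⟨t, rfl⟩
    simp [perpDot]
    ring
  · intro hx
    have h := dotProduct_self_smul_eq w (x - a)
    rw [map_sub, hx, sub_self, zero_smul, add_zero] at h
    refine ⟨(x - a) ⬝ᵥ w / w ⬝ᵥ w, ?_⟩
    rw [div_eq_inv_mul, mul_smul, ← h, smul_smul, inv_mul_cancel₀ hww, one_smul]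
    abel

end Plane

theorem stmt_7_general (k : ℕ) (A : Fin k → Finset (Fin 2 → ℝ))
    (hA : ∀ i, (A i).Nonempty)
    (l : Set (Fin 2 → ℝ))
    (hl : ∃ a w : Fin 2 → ℝ, w ≠ 0 ∧ l = {x | ∃ t : ℝ, x = a + t • w})
    (r : Fin k → ℕ)
    (hr : ∀ i, IsLeast {n : ℕ | ∃ c : Fin n → (Fin 2 → ℝ),
      (A i : Set (Fin 2 → ℝ)) ⊆ ⋃ j, (c j +ᵥ l)} (r i)) :
    ((∑ i, ((A i).card : ℝ) / (r i)) - ((k : ℝ) - 1)) *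
      ((∑ i, (r i : ℝ)) - ((k : ℝ) - 1)) ≤ ((∑ i, A i).card : ℝ) := by
  obtain ⟨a, w, hw, rfl⟩ := hl
  set e := (perpDot w).prod (dotProductAddHom w)
  have he : Function.Injective e := perpDot_injective_prod hw
  have hr : ∀ i, r i = #((A i).image (perpDot w)) := fun i ↦
    (hr i).unique (isLeast_card_image_of_eq_setOf _ _ (setOf_eq_add_smul_eq hw a))
  have hfst : ∀ i, ((A i).image e).image Prod.fst = (A i).image (perpDot w) := fun i ↦ by
    rw [image_image]; rfl
  have hbound := grynkiewiczSerraBound_le_card_sum fun i ↦ (hA i).image e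
  rw [← image_sum, card_image_of_injective _ he] at hbound
  simpa [grynkiewiczSerraBound, hfst, card_image_of_injective _ he, hr] using hbound

/-- k-fold Grynkiewicz–Serra inequality: if `r i` is the minimal number of translates
of the line `l` needed to cover `A i`, then
`|A₁ + ⋯ + A_k| ≥ (|A₁|/r₁ + ⋯ + |A_k|/r_k - (k-1)) (r₁ + ⋯ + r_k - (k-1))`. -/
theorem stmt_7 (k : ℕ) (hk : 2 ≤ k) (A : Fin k → Finset (Fin 2 → ℝ))
    (hA : ∀ i, (A i).Nonempty)
    (l : Set (Fin 2 → ℝ))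
    (hl : ∃ a w : Fin 2 → ℝ, w ≠ 0 ∧ l = {x | ∃ t : ℝ, x = a + t • w})
    (r : Fin k → ℕ)
    (hr : ∀ i, IsLeast {n : ℕ | ∃ c : Fin n → (Fin 2 → ℝ),
      (A i : Set (Fin 2 → ℝ)) ⊆ ⋃ j, (c j +ᵥ l)} (r i)) :
    ((∑ i, ((A i).card : ℝ) / (r i)) - ((k : ℝ) - 1)) *
      ((∑ i, (r i : ℝ)) - ((k : ℝ) - 1)) ≤ ((∑ i, A i).card : ℝ) :=
  stmt_7_general k A hA l hl r hr
end

section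
/- Let $d, k \geq 1$ with a basis equal to the standard basis of $\mathbb{R}^d$. For every subset $I \subseteq [d]$, every index $i \in [d]$, and all finite non-empty sets $A_1, \dots, A_k \subseteq \mathbb{R}^d$, one has $|\pi_I(\mathcal{C}_i(A_1) + \dots + \mathcal{C}_i(A_k))| \leq |\pi_I(A_1 + \dots + A_k)|$. -/
/-!
If `i ∉ I`, then `π_I` forgets the `i`-th coordinate, so `π_I(𝓒ᵢ(A)) = π_I(A)`; as `π_I` is
additive, the two projected sums coincide.

If `i ∈ I`, compare the two sides line by line in direction `eᵢ`. A point of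
`𝓒ᵢ(A₁) + ⋯ + 𝓒ᵢ(A_k)` is `∑ (u_j + n_j eᵢ)` with `n_j < |(A_j)_{u_j}|`. By Cauchy–Davenport in `ℝ`,
the sum of the `i`-th coordinate sets of the fibers `(A_j)_{u_j}` has at least `∑ n_j + 1`
elements, and all of them are `i`-th coordinates of points of `A₁ + ⋯ + A_k` on the line through
`∑ u_j`. After projecting, every point of the compressed side on a given line has `i`-th coordinate
a natural number smaller than the number of points of `π_I(A₁ + ⋯ + A_k)` on that line, so each
line contains at most as many points of the first set as of the second.
-/

open scoped Pointwise

/-- The fiber of `A` over `u` in the direction `eᵢ`. -/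
def fiberAt {d : ℕ} (i : Fin d) (A : Set (Fin d → ℝ)) (u : Fin d → ℝ) :
    Set (Fin d → ℝ) :=
  {a ∈ A | ∀ j, j ≠ i → a j = u j}

/-- The compression `𝓒ᵢ(A)` of `A` onto the coordinate hyperplane `{x : xᵢ = 0}` with
respect to `eᵢ`: its fiber over each `u` with `uᵢ = 0` is `{u + n eᵢ : 0 ≤ n ≤ |A_u| - 1}`. -/
noncomputable def compressAt {d : ℕ} (i : Fin d) (A : Set (Fin d → ℝ)) :
    Set (Fin d → ℝ) :=
  {p | ∃ u : Fin d → ℝ, u i = 0 ∧ (∀ j, j ≠ i → p j = u j) ∧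
    ∃ n : ℕ, n < (fiberAt i A u).ncard ∧ p i = n}

/-- The coordinate projection `π_I` applied to a set. -/
def projSet {d : ℕ} (I : Finset (Fin d)) (S : Set (Fin d → ℝ)) : Set (I → ℝ) :=
  (fun x (j : I) => x j.1) '' S

open Finset in
theorem Finset.card_le_card_of_forall_card_fiber_le {α β : Type*} [DecidableEq β] (f : α → β)
    {s t : Finset α} (h : ∀ b, #{a ∈ s | f a = b} ≤ #{a ∈ t | f a = b}) : #s ≤ #t :=
  calc #s = ∑ b ∈ s.image f, #{a ∈ s | f a = b} := card_eq_sum_card_image f s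
    _ ≤ ∑ b ∈ s.image f, #{a ∈ t | f a = b} := sum_le_sum fun b _ => h b
    _ = #{a ∈ t | f a ∈ s.image f} := sum_card_fiberwise_eq_card_filter t _ f
    _ ≤ #t := card_filter_le t _

theorem Set.ncard_le_ncard_of_forall_ncard_fiber_le {α β : Type*} (f : α → β) {S T : Set α}
    (hT : T.Finite) (h : ∀ b, (S ∩ f ⁻¹' {b}).ncard ≤ (T ∩ f ⁻¹' {b}).ncard) :
    S.ncard ≤ T.ncard := by
  classical
  rcases S.finite_or_infinite with hS | hS
  · obtain ⟨s, rfl⟩ := hS.exists_finset_coe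
    obtain ⟨t, rfl⟩ := hT.exists_finset_coe
    simp only [Set.ncard_coe_finset]
    refine Finset.card_le_card_of_forall_card_fiber_le f fun b => ?_
    rw [← Set.ncard_coe_finset, ← Set.ncard_coe_finset, Finset.coe_filter, Finset.coe_filter]
    exact h b
  · simp [hS.ncard]

theorem Set.finite_fintype_sum {κ α : Type*} [Fintype κ] [AddCommMonoid α] {A : κ → Set α}
    (hA : ∀ j, (A j).Finite) : (∑ j, A j).Finite :=
  Set.image_fintype_sum_pi A ▸ (Set.Finite.pi hA).image _

section CauchyDavenport

variable {α : Type*} [AddCommMonoid α] [LinearOrder α] [IsCancelAdd α] [AddLeftMono α]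

theorem Set.ncard_add_ncard_le_ncard_add {s t : Set α} (hs : 0 < s.ncard) (ht : 0 < t.ncard) :
    s.ncard + t.ncard ≤ (s + t).ncard + 1 := by
  obtain ⟨s, rfl⟩ := (Set.finite_of_ncard_pos hs).exists_finset_coe
  obtain ⟨t, rfl⟩ := (Set.finite_of_ncard_pos ht).exists_finset_coe
  classical
  rw [← Finset.coe_add]
  simp only [Set.ncard_coe_finset] at hs ht ⊢
  have := cauchy_davenport_add_of_linearOrder_isCancelAdd (Finset.card_pos.mp hs)
    (Finset.card_pos.mp ht)
  omega

theorem Set.sum_ncard_add_one_le_ncard_sum_add_card {ι : Type*} (s : Finset ι) {X : ι → Set α}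
    (hX : ∀ j ∈ s, 0 < (X j).ncard) :
    ∑ j ∈ s, (X j).ncard + 1 ≤ (∑ j ∈ s, X j).ncard + s.card := by
  classical
  induction s using Finset.cons_induction with
  | empty => simp [← Set.singleton_zero]
  | cons a s _ ih =>
    have ih := ih fun j hj => hX j (Finset.mem_cons_of_mem hj)
    have hsum : s.card ≤ ∑ j ∈ s, (X j).ncard := (Finset.card_eq_sum_ones s).trans_le <|
      Finset.sum_le_sum fun j hj => hX j (Finset.mem_cons_of_mem hj)
    have := Set.ncard_add_ncard_le_ncard_add (hX a (Finset.mem_cons_self a s))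
      (show 0 < (∑ j ∈ s, X j).ncard by omega)
    rw [Finset.sum_cons, Finset.sum_cons, Finset.card_cons]
    omega

end CauchyDavenport

def lineCoords {ι G : Type*} (i : ι) (S : Set (ι → G)) (y : ι → G) : Set G :=
  (fun w => w i) '' {w ∈ S | ∀ j, j ≠ i → w j = y j}

section lineCoords

variable {ι G : Type*} (i : ι)

theorem lineCoords_congr {S : Set (ι → G)} {y y' : ι → G} (h : ∀ j, j ≠ i → y j = y' j) :
    lineCoords i S y = lineCoords i S y' := by
  have hline : ∀ w : ι → G, (∀ j, j ≠ i → w j = y j) ↔ ∀ j, j ≠ i → w j = y' j :=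
    fun w => forall₂_congr fun j hj => by rw [h j hj]
  simp only [lineCoords, hline]

theorem ncard_lineCoords (S : Set (ι → G)) (y : ι → G) :
    (lineCoords i S y).ncard = {w ∈ S | ∀ j, j ≠ i → w j = y j}.ncard := by
  refine Set.InjOn.ncard_image fun w hw w' hw' hww' => funext fun j => ?_
  by_cases hj : j = i
  · exact hj ▸ hww'
  · rw [hw.2 j hj, hw'.2 j hj]

theorem lineCoords_finite {S : Set (ι → G)} (hS : S.Finite) (y : ι → G) :
    (lineCoords i S y).Finite :=
  (hS.subset fun _ hw => hw.1).image _

theorem sum_lineCoords_subset [AddCommMonoid G] {κ : Type*} [Fintype κ] (S : κ → Set (ι → G))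
    (u : κ → ι → G) : ∑ j, lineCoords i (S j) (u j) ⊆ lineCoords i (∑ j, S j) (∑ j, u j) := by
  intro t ht
  obtain ⟨g, hg, rfl⟩ := (Set.mem_fintype_sum _ t).mp ht
  choose w hw hwg using hg
  refine ⟨∑ j, w j, ⟨Set.finsetSum_mem_finsetSum _ _ _ fun j _ => (hw j).1, fun l hl => ?_⟩, ?_⟩
  · simp only [Finset.sum_apply, fun j => (hw j).2 l hl]
  · simp only [Finset.sum_apply, hwg]

theorem ncard_le_ncard_of_forall_coord_lt {S T : Set (ι → ℝ)} (hT : T.Finite)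
    (h : ∀ y ∈ S, ∃ N : ℕ, y i = N ∧ N < (lineCoords i T y).ncard) : S.ncard ≤ T.ncard := by
  set f : (ι → ℝ) → {j // j ≠ i} → ℝ := fun y j => y j
  refine Set.ncard_le_ncard_of_forall_ncard_fiber_le f hT fun b => ?_
  rcases (S ∩ f ⁻¹' {b}).eq_empty_or_nonempty with hb | ⟨y, -, hyb⟩
  · simp [hb]
  obtain rfl : f y = b := hyb
  have hline : ∀ z, f z = f y ↔ ∀ j, j ≠ i → z j = y j :=
    fun z => ⟨fun hz j hj => congrFun hz ⟨j, hj⟩, fun hz => funext fun j => hz j j.2⟩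
  calc (S ∩ f ⁻¹' {f y}).ncard
        ≤ (Nat.cast '' ↑(Finset.range (lineCoords i T y).ncard) : Set ℝ).ncard := by
        refine Set.ncard_le_ncard_of_injOn (fun z => z i) ?_ ?_ ((Finset.finite_toSet _).image _)
        · rintro z ⟨hzS, hzy⟩
          obtain ⟨N, hzN, hN⟩ := h z hzS
          rw [lineCoords_congr i ((hline z).mp hzy)] at hN
          exact ⟨N, Finset.mem_range.mpr hN, hzN.symm⟩
        · intro z ⟨_, hzy⟩ z' ⟨_, hzy'⟩ hzz'
          funext j
          by_cases hj : j = i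
          · exact hj ▸ hzz'
          · rw [(hline z).mp hzy j hj, (hline z').mp hzy' j hj]
    _ ≤ (lineCoords i T y).ncard := (Set.ncard_image_le (Finset.finite_toSet _)).trans
        (by rw [Set.ncard_coe_finset, Finset.card_range])
    _ = (T ∩ f ⁻¹' {f y}).ncard := by
        rw [ncard_lineCoords]
        congr 1
        ext z
        exact and_congr_right fun _ => (hline z).symm

end lineCoords

theorem exists_coord_eq_nat_lt_ncard_lineCoords {d : ℕ} {κ : Type*} [Fintype κ] {i : Fin d}
    {A : κ → Set (Fin d → ℝ)} (hA : ∀ j, (A j).Finite) {x : Fin d → ℝ}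
    (hx : x ∈ ∑ j, compressAt i (A j)) :
    ∃ N : ℕ, x i = N ∧ N < (lineCoords i (∑ j, A j) x).ncard := by
  obtain ⟨p, hp, rfl⟩ := (Set.mem_fintype_sum _ x).mp hx
  choose u _ hpu n hn hpn using hp
  set X := fun j => lineCoords i (A j) (u j)
  -- the set on the right of `ncard_lineCoords` is `fiberAt i (A j) (u j)` by definition
  have hX : ∀ j, n j < (X j).ncard := fun j => (ncard_lineCoords i _ _).symm ▸ hn j
  refine ⟨∑ j, n j, by simp [Finset.sum_apply, hpn], ?_⟩
  have hcd := Set.sum_ncard_add_one_le_ncard_sum_add_card Finset.univ (X := X)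
    fun j _ => (Nat.zero_le _).trans_lt (hX j)
  have hsub : (∑ j, X j).ncard ≤ (lineCoords i (∑ j, A j) (∑ j, p j)).ncard := by
    rw [lineCoords_congr i (y' := ∑ j, u j) fun l hl => by
      simp only [Finset.sum_apply, fun j => hpu j l hl]]
    exact Set.ncard_le_ncard (sum_lineCoords_subset i A u)
      (lineCoords_finite i (Set.finite_fintype_sum hA) _)
  have hn : ∑ j, n j + (Finset.univ : Finset κ).card ≤ ∑ j, (X j).ncard := by
    rw [Finset.card_eq_sum_ones, ← Finset.sum_add_distrib]
    exact Finset.sum_le_sum fun j _ => hX j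
  omega

theorem ncard_lineCoords_le_projSet {d : ℕ} {I : Finset (Fin d)} {i : Fin d} (hi : i ∈ I)
    {S : Set (Fin d → ℝ)} (hS : S.Finite) (x : Fin d → ℝ) :
    (lineCoords i S x).ncard ≤ (lineCoords ⟨i, hi⟩ (projSet I S) (fun j : I => x j)).ncard := by
  refine Set.ncard_le_ncard ?_ (lineCoords_finite _ (hS.image _) _)
  rintro _ ⟨w, ⟨hwS, hw⟩, rfl⟩
  exact ⟨fun j => w j, ⟨⟨w, hwS, rfl⟩, fun j hj => hw j fun h => hj (Subtype.ext h)⟩, rfl⟩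

theorem projSet_sum {d : ℕ} (I : Finset (Fin d)) {κ : Type*} [Fintype κ]
    (S : κ → Set (Fin d → ℝ)) : projSet I (∑ j, S j) = ∑ j, projSet I (S j) :=
  Set.image_finsetSum (LinearMap.funLeft ℝ ℝ ((↑) : I → Fin d)) _ _

theorem projSet_compressAt_of_notMem {d : ℕ} {I : Finset (Fin d)} {i : Fin d} (hi : i ∉ I)
    {A : Set (Fin d → ℝ)} (hA : A.Finite) : projSet I (compressAt i A) = projSet I A := by
  have hI : ∀ j : I, (j : Fin d) ≠ i := fun j h => hi (h ▸ j.2)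
  ext y
  constructor
  · rintro ⟨p, ⟨u, -, hpu, n, hn, -⟩, rfl⟩
    obtain ⟨a, haA, hau⟩ := Set.nonempty_of_ncard_ne_zero (Nat.ne_zero_of_lt hn)
    exact ⟨a, haA, funext fun j => (hau j (hI j)).trans (hpu j (hI j)).symm⟩
  · rintro ⟨a, haA, rfl⟩
    have hfiber : 0 < (fiberAt i A (Function.update a i 0)).ncard :=
      (Set.ncard_pos (hA.subset fun _ hb => hb.1)).mpr
        ⟨a, haA, fun j hj => (Function.update_of_ne hj _ _).symm⟩
    exact ⟨Function.update a i 0, ⟨_, Function.update_self .., fun _ _ => rfl, 0, hfiber,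
      by simp⟩, funext fun j => Function.update_of_ne (hI j) _ _⟩

theorem stmt_9_general (d k : ℕ) (I : Finset (Fin d)) (i : Fin d)
    (A : Fin k → Set (Fin d → ℝ))
    (hfin : ∀ j, (A j).Finite) :
    (projSet I (∑ j, compressAt i (A j))).ncard ≤ (projSet I (∑ j, A j)).ncard := by
  have hT : (∑ j, A j).Finite := Set.finite_fintype_sum hfin
  by_cases hi : i ∈ I
  · refine ncard_le_ncard_of_forall_coord_lt ⟨i, hi⟩ (hT.image _) ?_
    rintro _ ⟨x, hx, rfl⟩
    obtain ⟨N, hxN, hN⟩ := exists_coord_eq_nat_lt_ncard_lineCoords hfin hx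
    exact ⟨N, hxN, hN.trans_le (ncard_lineCoords_le_projSet hi hT x)⟩
  · simp only [projSet_sum, projSet_compressAt_of_notMem hi (hfin _), le_refl]

/-- `|π_I(𝓒ᵢ(A₁) + ⋯ + 𝓒ᵢ(A_k))| ≤ |π_I(A₁ + ⋯ + A_k)|`. -/
theorem stmt_9 (d k : ℕ) (I : Finset (Fin d)) (i : Fin d)
    (A : Fin k → Set (Fin d → ℝ))
    (hfin : ∀ j, (A j).Finite) (hne : ∀ j, (A j).Nonempty) :
    (projSet I (∑ j, compressAt i (A j))).ncard ≤ (projSet I (∑ j, A j)).ncard :=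
  stmt_9_general d k I i A hfin
end

section
/- Let $\mathbb{F}$ be $\mathbb{Q}$ or $\mathbb{R}$, let $\mathcal{L}_1, \dots, \mathcal{L}_k \in \mathrm{GL}_d(\mathbb{F})$ be $\mathbb{F}$-irreducible, and let $A \subset \mathbb{F}^d$ be a finite non-empty set with $|\mathcal{L}_1(A) + \dots + \mathcal{L}_k(A)| \leq K|A|$ for some $K \geq 1$. Then for any subspace $U \subseteq \mathbb{F}^d$ of dimension $r < d$, one has $\sup_{x \in \mathbb{F}^d} |(x + U) \cap A| \leq (K|A|)^{1 - 2^{-r}}$. -/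
open scoped Pointwise

/-- A family `𝓛₁, …, 𝓛_k ∈ GL_d(F)` is `F`-irreducible if there are no non-trivial
subspaces `U, V ⊆ F^d` of the same dimension with `𝓛ᵢ(U) ⊆ V` for all `i`. -/
def IrredFamily (F : Type) [Field F] {d k : ℕ}
    (L : Fin k → ((Fin d → F) ≃ₗ[F] (Fin d → F))) : Prop :=
  ¬ ∃ U V : Submodule F (Fin d → F), U ≠ ⊥ ∧ U ≠ ⊤ ∧
      Module.finrank F U = Module.finrank F V ∧
      ∀ i, U.map (L i).toLinearMap ≤ V

/-- Statement of Lemma 4.4 over the field `F`: if `𝓛₁, …, 𝓛_k` are `F`-irreducible and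
`|𝓛₁(A) + ⋯ + 𝓛_k(A)| ≤ K|A|`, then for any subspace `U` of dimension `r < d` and any
`x ∈ F^d` one has `|(x + U) ∩ A| ≤ (K|A|)^{1 - 2^{-r}}`. -/
def Stmt11 (F : Type) [Field F] [DecidableEq F] : Prop :=
  ∀ (d k : ℕ) (L : Fin k → ((Fin d → F) ≃ₗ[F] (Fin d → F))),
    IrredFamily F L →
    ∀ A : Finset (Fin d → F), A.Nonempty →
    ∀ K : ℝ, 1 ≤ K →
    ((∑ i, A.image (L i)).card : ℝ) ≤ K * A.card →
    ∀ U : Submodule F (Fin d → F), Module.finrank F U < d →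
    ∀ x : Fin d → F,
      ((((x +ᵥ (U : Set (Fin d → F))) ∩ (A : Set (Fin d → F))).ncard : ℝ)) ≤
        (K * A.card) ^ ((1 : ℝ) - (1 : ℝ) / 2 ^ (Module.finrank F U))

private lemma sum_finsets_nonempty {α : Type*} [AddCommMonoid α] [DecidableEq α] {k : ℕ}
    (S : Fin k → Finset α) (h : ∀ i, (S i).Nonempty) (s : Finset (Fin k)) :
    (∑ i ∈ s, S i).Nonempty := by
  induction s using Finset.cons_induction with
  | empty => exact ⟨0, by simp [Finset.sum_empty]⟩
  | cons a s ha ih => rw [Finset.sum_cons]; exact (h a).add ih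

open Module in
private lemma key_lemma (F : Type) [Field F] [DecidableEq F] :
    ∀ (r d k : ℕ) (L : Fin k → ((Fin d → F) ≃ₗ[F] (Fin d → F))),
    IrredFamily F L →
    ∀ A : Finset (Fin d → F), A.Nonempty →
    ∀ K : ℝ, 1 ≤ K →
    ((∑ i, A.image (L i)).card : ℝ) ≤ K * A.card →
    ∀ U : Submodule F (Fin d → F), finrank F U < d → finrank F U = r →
    ∀ x : Fin d → F,
      ((((x +ᵥ (U : Set (Fin d → F))) ∩ (A : Set (Fin d → F))).ncard : ℝ)) ≤
        (K * A.card) ^ ((1 : ℝ) - (1 : ℝ) / 2 ^ r) := by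
  intro r
  induction r using Nat.strong_induction_on with
  | _ r IH =>
  intro d k L hirr A hA K hK hsum U hUd hUr x
  classical
  set N : ℝ := K * A.card with hN
  have hA1 : (1 : ℝ) ≤ (A.card : ℝ) := by exact_mod_cast hA.card_pos
  have hN1 : (1 : ℝ) ≤ N := by
    calc (1:ℝ) ≤ K := hK
    _ = K * 1 := (mul_one K).symm
    _ ≤ K * A.card := mul_le_mul_of_nonneg_left hA1 (le_trans zero_le_one hK)
  have hN0 : (0 : ℝ) ≤ N := le_trans zero_le_one hN1
  obtain _ | r' := r
  · -- base case r = 0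
    have hUbot : U = ⊥ := Submodule.finrank_eq_zero.mp hUr
    subst hUbot
    have hsub : ((x +ᵥ ((⊥ : Submodule F (Fin d → F)) : Set (Fin d → F))) ∩
        (A : Set (Fin d → F))) ⊆ {x} := by
      intro a ha
      obtain ⟨ha1, _⟩ := ha
      rw [Set.mem_vadd_set_iff_neg_vadd_mem] at ha1
      simp only [SetLike.mem_coe, Submodule.mem_bot, vadd_eq_add] at ha1
      have : a = x := by
        have h' := neg_add_eq_zero.mp ha1
        exact h'.symm
      simp [this]
    have h1 : ((x +ᵥ ((⊥ : Submodule F (Fin d → F)) : Set (Fin d → F))) ∩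
        (A : Set (Fin d → F))).ncard ≤ 1 := by
      have := Set.ncard_le_ncard hsub (Set.finite_singleton x)
      simpa using this
    have hz : ((1:ℝ) - 1 / 2 ^ (0:ℕ)) = 0 := by norm_num
    rw [hz, Real.rpow_zero]
    exact_mod_cast h1
  · -- inductive step, r = r' + 1
    have hU_ne_bot : U ≠ ⊥ := by
      intro h
      rw [h] at hUr
      simp at hUr
    have hU_ne_top : U ≠ ⊤ := by
      intro h
      rw [h] at hUr hUd
      have : finrank F (⊤ : Submodule F (Fin d → F)) = d := by
        rw [finrank_top]; simp [Module.finrank_fintype_fun_eq_card]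
      omega
    obtain ⟨i, j, hij⟩ : ∃ i j : Fin k,
        U.map (L i).toLinearMap ≠ U.map (L j).toLinearMap := by
      by_contra h
      push_neg at h
      rcases Nat.eq_zero_or_pos k with hk | hk
      · exact hirr ⟨U, U, hU_ne_bot, hU_ne_top, rfl,
          fun i => absurd i.isLt (by omega)⟩
      · exact hirr ⟨U, U.map (L ⟨0, hk⟩).toLinearMap, hU_ne_bot, hU_ne_top,
          (LinearEquiv.finrank_map_eq (L ⟨0, hk⟩) U).symm,
          fun i => le_of_eq (h i ⟨0, hk⟩)⟩
    have hine : i ≠ j := by rintro rfl; exact hij rfl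
    set U' : Submodule F (Fin d → F) :=
      U ⊓ Submodule.comap (L i).toLinearMap (U.map (L j).toLinearMap) with hU'
    have hU'le : U' ≤ U := inf_le_left
    have hr'' : finrank F U' < r' + 1 := by
      rcases lt_or_eq_of_le (Submodule.finrank_mono hU'le) with h | h
      · omega
      · exfalso
        have hUU' : U' = U := Submodule.eq_of_le_of_finrank_eq hU'le h
        have hle2 : U.map (L i).toLinearMap ≤ U.map (L j).toLinearMap := by
          rw [Submodule.map_le_iff_le_comap]
          calc U = U' := hUU'.symm
          _ ≤ _ := inf_le_right
        have heqr : finrank F (U.map (L i).toLinearMap) =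
            finrank F (U.map (L j).toLinearMap) := by
          rw [LinearEquiv.finrank_map_eq, LinearEquiv.finrank_map_eq]
        exact hij (Submodule.eq_of_le_of_finrank_eq hle2 heqr)
    set B : Finset (Fin d → F) :=
      A.filter (fun a => a ∈ x +ᵥ (U : Set (Fin d → F))) with hB
    have hBA : B ⊆ A := Finset.filter_subset _ _
    have hTB : (x +ᵥ (U : Set (Fin d → F))) ∩ (A : Set (Fin d → F)) = ↑B := by
      ext a
      simp only [hB, Finset.coe_filter, Set.mem_setOf_eq, Set.mem_inter_iff,
        Finset.mem_coe]
      tauto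
    rw [hTB, Set.ncard_coe_finset]
    have hmemU : ∀ a ∈ B, -x + a ∈ U := by
      intro a haB
      have h' := (Finset.mem_filter.mp haB).2
      rw [Set.mem_vadd_set_iff_neg_vadd_mem] at h'
      simpa using h'
    have hsubU : ∀ a ∈ B, ∀ b ∈ B, a - b ∈ U := by
      intro a ha b hb
      have h' : a - b = (-x + a) - (-x + b) := by abel
      rw [h']
      exact sub_mem (hmemU a ha) (hmemU b hb)
    set t : Finset (Fin d → F) := B.image (L i) + B.image (L j) with ht
    have htN : (t.card : ℝ) ≤ N := by
      have h1 : t ⊆ A.image (L i) + A.image (L j) :=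
        Finset.add_subset_add (Finset.image_subset_image hBA)
          (Finset.image_subset_image hBA)
      have h2 : (A.image (L i) + A.image (L j)).card ≤
          (∑ s, A.image (L s)).card := by
        have hRne : (∑ s ∈ (Finset.univ.erase i).erase j,
            A.image (L s)).Nonempty :=
          sum_finsets_nonempty _ (fun s => hA.image _) _
        have hdecomp : (∑ s, A.image (L s)) =
            (A.image (L i) + A.image (L j)) +
              ∑ s ∈ (Finset.univ.erase i).erase j, A.image (L s) := by
          rw [← Finset.add_sum_erase _ _ (Finset.mem_univ i),
            ← Finset.add_sum_erase _ _
              (Finset.mem_erase.mpr ⟨hine.symm, Finset.mem_univ j⟩), add_assoc]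
        rw [hdecomp]
        exact Finset.card_le_card_add_right hRne
      calc (t.card : ℝ) ≤ ((A.image (L i) + A.image (L j)).card : ℝ) := by
            exact_mod_cast Finset.card_le_card h1
      _ ≤ ((∑ s, A.image (L s)).card : ℝ) := by exact_mod_cast h2
      _ ≤ N := hsum
    set e' : ℝ := 1 - 1 / 2 ^ r' with he'
    have hfiber : ∀ a ∈ t,
        ((((B ×ˢ B).filter (fun p => L i p.1 + L j p.2 = a)).card : ℝ)) ≤
          N ^ e' := by
      intro a _
      set Fa := (B ×ˢ B).filter (fun p => L i p.1 + L j p.2 = a) with hFa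
      rcases Fa.eq_empty_or_nonempty with h | h
      · rw [h]
        simp only [Finset.card_empty, Nat.cast_zero]
        positivity
      · obtain ⟨⟨b, b'⟩, hb⟩ := h
        have hbB : b ∈ B ∧ b' ∈ B ∧ L i b + L j b' = a := by
          have h' := Finset.mem_filter.mp hb
          exact ⟨(Finset.mem_product.mp h'.1).1,
            (Finset.mem_product.mp h'.1).2, h'.2⟩
        have hmem : ∀ p ∈ (Fa : Set ((Fin d → F) × (Fin d → F))),
            p.1 ∈ (b +ᵥ (U' : Set (Fin d → F))) ∩ (A : Set (Fin d → F)) := by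
          rintro ⟨c, c'⟩ hc
          rw [Finset.mem_coe] at hc
          have hc' := Finset.mem_filter.mp hc
          have hcB : c ∈ B := (Finset.mem_product.mp hc'.1).1
          have hcB' : c' ∈ B := (Finset.mem_product.mp hc'.1).2
          have hsum2 : L i c + L j c' = a := hc'.2
          constructor
          · rw [Set.mem_vadd_set_iff_neg_vadd_mem]
            have h1 : c - b ∈ U := hsubU c hcB b hbB.1
            have h2 : (L i) (c - b) ∈ U.map (L j).toLinearMap := by
              have heq : (L i) (c - b) = (L j) (b' - c') := by
                have e1 : (L i) c + (L j) c' = (L i) b + (L j) b' := by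
                  rw [hsum2, hbB.2.2]
                rw [map_sub, map_sub]
                have : (L i) c - (L i) b = (L j) b' - (L j) c' := by
                  rw [sub_eq_sub_iff_add_eq_add]
                  rw [e1]; ring
                exact this
              rw [heq]
              exact Submodule.mem_map_of_mem (hsubU b' hbB.2.1 c' hcB')
            show -b +ᵥ c ∈ U'
            have hvadd : -b +ᵥ c = c - b := by
              simp [vadd_eq_add, neg_add_eq_sub]
            rw [hvadd]
            exact Submodule.mem_inf.mpr ⟨h1, h2⟩
          · exact Finset.mem_coe.mpr (hBA hcB)
        have hinj : Set.InjOn (fun p : (Fin d → F) × (Fin d → F) => p.1)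
            (Fa : Set ((Fin d → F) × (Fin d → F))) := by
          rintro ⟨c, c'⟩ hc ⟨g, g'⟩ hg hcg
          simp only at hcg
          rw [Finset.mem_coe] at hc hg
          have hc2 := (Finset.mem_filter.mp hc).2
          have hg2 := (Finset.mem_filter.mp hg).2
          subst hcg
          have hL : (L j) c' = (L j) g' := by
            have h' : (L i) c + (L j) c' = (L i) c + (L j) g' := by
              rw [hc2, hg2]
            exact add_left_cancel h'
          have : c' = g' := (L j).injective hL
          rw [this]
        have hfin : ((b +ᵥ (U' : Set (Fin d → F))) ∩ (A : Set (Fin d → F))).Finite :=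
          A.finite_toSet.inter_of_right _
        have hcard : (Fa.card : ℕ) ≤
            ((b +ᵥ (U' : Set (Fin d → F))) ∩ (A : Set (Fin d → F))).ncard := by
          rw [← Set.ncard_coe_finset]
          exact Set.ncard_le_ncard_of_injOn _ hmem hinj hfin
        have hIH := IH (finrank F U') hr'' d k L hirr A hA K hK hsum U'
          (by omega) rfl b
        calc (Fa.card : ℝ) ≤
            (((b +ᵥ (U' : Set (Fin d → F))) ∩ (A : Set (Fin d → F))).ncard : ℝ) := by
              exact_mod_cast hcard
        _ ≤ N ^ ((1:ℝ) - 1 / 2 ^ (finrank F U')) := hIH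
        _ ≤ N ^ e' := by
            apply Real.rpow_le_rpow_of_exponent_le hN1
            rw [he']
            have : (1:ℝ) / 2 ^ r' ≤ 1 / 2 ^ (finrank F U') := by
              apply one_div_le_one_div_of_le (by positivity)
              exact pow_le_pow_right₀ one_le_two (by omega)
            linarith
    have hmapsto : ∀ p ∈ B ×ˢ B,
        (fun p : (Fin d → F) × (Fin d → F) => L i p.1 + L j p.2) p ∈ t := by
      intro p hp
      obtain ⟨h1, h2⟩ := Finset.mem_product.mp hp
      exact Finset.add_mem_add (Finset.mem_image_of_mem _ h1)
        (Finset.mem_image_of_mem _ h2)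
    have hcount := Finset.card_eq_sum_card_fiberwise hmapsto
    have hsq : ((B.card : ℝ))^2 ≤ N * N ^ e' := by
      calc ((B.card:ℝ))^2 = ((B ×ˢ B).card : ℝ) := by
            rw [Finset.card_product]; push_cast; ring
      _ = ∑ a ∈ t, ((((B ×ˢ B).filter
            (fun p => L i p.1 + L j p.2 = a)).card : ℝ)) := by
            rw [hcount]; push_cast; rfl
      _ ≤ ∑ _a ∈ t, N ^ e' := Finset.sum_le_sum hfiber
      _ = t.card * N ^ e' := by rw [Finset.sum_const, nsmul_eq_mul]
      _ ≤ N * N ^ e' := mul_le_mul_of_nonneg_right htN (Real.rpow_nonneg hN0 _)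
    have hexp : N * N ^ e' = (N ^ ((1:ℝ) - 1 / 2 ^ (r' + 1)))^2 := by
      have h2 : (1:ℝ) + e' = ((1:ℝ) - 1 / 2 ^ (r' + 1)) * 2 := by
        rw [he', pow_succ]
        have h2r : (2:ℝ) ^ r' ≠ 0 := by positivity
        field_simp
        ring
      calc N * N ^ e' = N ^ ((1:ℝ) + e') := by
            rw [Real.rpow_add (lt_of_lt_of_le one_pos hN1), Real.rpow_one]
      _ = N ^ (((1:ℝ) - 1 / 2 ^ (r' + 1)) * 2) := by rw [h2]
      _ = (N ^ ((1:ℝ) - 1 / 2 ^ (r' + 1)))^2 := by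
            rw [Real.rpow_mul hN0, show ((2:ℝ)) = ((2:ℕ):ℝ) by norm_num,
              Real.rpow_natCast]
    rw [hexp] at hsq
    exact (pow_le_pow_iff_left₀ (by positivity)
      (Real.rpow_nonneg hN0 _) two_ne_zero).mp hsq

/-- Lemma 4.4 holds for `F = ℚ` and for `F = ℝ`. -/
theorem stmt_11 : Stmt11 ℚ ∧ Stmt11 ℝ := by
  constructor <;>
    exact fun d k L h A hA K hK hs U hU x =>
      key_lemma _ (Module.finrank _ U) d k L h A hA K hK hs U hU rfl x
end

section
/- Let $d, k$ be positive integers and let $A \subseteq \mathbb{R}^d$ be a finite non-empty set with affine dimension $d$. Then $|kA| \geq \binom{k+d-1}{d}|A| - (k-1)\binom{k+d-1}{d-1}$. -/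
open scoped Pointwise

/-!
Write `k = K + 1` and induct on `|A|`. Remove a vertex `v` of the convex hull of `A`, so that
`A = A' ∪ {v}`.

If `v` lies outside the affine span of `A'`, the dimension drops by one, and a linear functional
that is constant on `A'` and larger at `v` separates the layers `(K + 1 - j) • v + j • A'`,
`0 ≤ j ≤ K + 1`, of `(K + 1) • A`.

Otherwise some facet `S` of the convex hull of `A'` is visible from `v`: `f ≤ c` on `A'`,
`f = c` on `S`, `f v > c`, and `S ∪ {v}` spans `A`. Then `(K + 1) • A` contains `(K + 1) • A'`
and, strictly above it in the direction of `f`, the disjoint layers `(K + 1 - j) • v + j • S`,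
`0 ≤ j ≤ K`, where `S` has one dimension less and at least `dim A` points.

In both cases the induction hypothesis and the hockey-stick identity give the bound.
-/

open Finset Module

/-- The lower bound for `#((K + 1) • A)` when `A` has `n` points and affine dimension `m`.
The coefficient `(K + m).choose (K + 1)` is the paper's `C(K + m, m - 1)`, written so that it
vanishes for `m = 0` instead of taking the junk value of `m - 1`. -/
noncomputable def freimanBound (m K : ℕ) (n : ℝ) : ℝ :=
  (K + m).choose m * n - K * (K + m).choose (K + 1)

theorem freimanBound_mono (m K : ℕ) : Monotone (freimanBound m K) := fun _ _ h =>
  sub_le_sub_right (mul_le_mul_of_nonneg_left h (Nat.cast_nonneg _)) _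

theorem freimanBound_simplex (M J : ℕ) :
    freimanBound M J (M + 1) = (J + 1 + M).choose M := by
  have h₁ : ((J + M).choose (J + 1) : ℝ) * (J + 1) = (J + M).choose J * M := by
    exact_mod_cast (by simpa using Nat.choose_succ_right_eq (J + M) J)
  have h₂ : (J + 1 + M).choose M = (J + M).choose J + (J + M).choose (J + 1) := by
    rw [Nat.choose_symm_of_eq_add (by omega : J + 1 + M = M + (J + 1)), add_right_comm,
      Nat.choose_succ_succ']
  have h₃ : (J + M).choose M = (J + M).choose J := Nat.choose_symm_add.symm
  unfold freimanBound
  rw [h₂, h₃]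
  push_cast
  linear_combination -h₁

theorem one_add_sum_freimanBound_simplex (M K : ℕ) :
    1 + ∑ J ∈ range K, freimanBound M J (M + 1) = (K + (M + 1)).choose (M + 1) := by
  have hockey := Nat.sum_range_add_choose K M
  rw [sum_range_succ', zero_add, Nat.choose_self] at hockey
  rw [← add_assoc, ← hockey]
  simp only [freimanBound_simplex]
  push_cast
  ring

theorem freimanBound_succ (M K : ℕ) (n : ℝ) :
    freimanBound (M + 1) K (n + 1) = 1 + ∑ J ∈ range (K + 1), freimanBound M J n := by
  induction K with
  | zero => simp [freimanBound, add_comm]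
  | succ K ih =>
    set N := K + (M + 1)
    have h₁ : (N + 1).choose (M + 1) = N.choose M + N.choose (M + 1) := Nat.choose_succ_succ' ..
    have h₂ : (N + 1).choose (K + 2) = N.choose (K + 1) + N.choose (K + 2) :=
      Nat.choose_succ_succ' ..
    have h₃ : N.choose M = N.choose (K + 1) := Nat.choose_symm_of_eq_add (by omega)
    rw [sum_range_succ, ← add_assoc, ← ih]
    unfold freimanBound
    rw [show K + 1 + (M + 1) = N + 1 by omega, show K + 1 + M = N by omega, h₁, h₂, h₃]
    push_cast
    ring

section VectorSpace

variable {E : Type*} [AddCommGroup E] [Module ℝ E]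

theorem map_le_of_mem_nsmul [DecidableEq E] (f : E →ₗ[ℝ] ℝ) {A : Finset E} {c : ℝ}
    (hA : ∀ a ∈ A, f a ≤ c) {n : ℕ} {x : E} (hx : x ∈ n • A) : f x ≤ n * c := by
  induction n generalizing x with
  | zero => simp_all
  | succ n ih =>
    obtain ⟨y, hy, a, ha, rfl⟩ := mem_add.1 (succ_nsmul A n ▸ hx)
    rw [map_add]
    push_cast
    linarith [ih hy, hA a ha]

theorem map_eq_of_mem_nsmul [DecidableEq E] (f : E →ₗ[ℝ] ℝ) {S : Finset E} {c : ℝ}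
    (hS : ∀ a ∈ S, f a = c) {n : ℕ} {x : E} (hx : x ∈ n • S) : f x = n * c := by
  have h₁ := map_le_of_mem_nsmul f (fun a ha => (hS a ha).le) hx
  have h₂ := map_le_of_mem_nsmul (-f) (c := -c) (fun a ha => by simp [hS a ha]) hx
  simp only [LinearMap.neg_apply, mul_neg, neg_le_neg_iff] at h₂
  exact le_antisymm h₁ h₂

/-- The layers `(K + 1 - j) • v + j • S` lie on the distinct levels
`(K + 1) * c + (K + 1 - j) * (f v - c)` of `f`, all above the maximum `(K + 1) * c` of `f` on
`(K + 1) • A`. -/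
theorem card_nsmul_add_sum_card_nsmul_le [DecidableEq E] {A S : Finset E} {v : E}
    (f : E →ₗ[ℝ] ℝ) {c : ℝ} (hSA : S ⊆ A) (hA : ∀ a ∈ A, f a ≤ c) (hS : ∀ a ∈ S, f a = c)
    (hv : c < f v) (K : ℕ) :
    #((K + 1) • A) + ∑ j ∈ range (K + 1), #(j • S) ≤ #((K + 1) • insert v A) := by
  set layer : ℕ → Finset E := fun j => (K + 1 - j) • v +ᵥ j • S
  have hlevel : ∀ j ∈ range (K + 1), ∀ x ∈ layer j,
      f x = (K + 1) * c + (K + 1 - j) * (f v - c) := by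
    intro j hj x hx
    obtain ⟨y, hy, rfl⟩ := mem_vadd_finset.1 hx
    rw [vadd_eq_add, map_add, map_nsmul, map_eq_of_mem_nsmul f hS hy, nsmul_eq_mul,
      Nat.cast_sub (mem_range.1 hj).le]
    push_cast
    ring
  have hlayer : ∀ j ∈ range (K + 1), layer j ⊆ (K + 1) • insert v A := by
    intro j hj x hx
    obtain ⟨y, hy, rfl⟩ := mem_vadd_finset.1 hx
    rw [← Nat.sub_add_cancel (mem_range.1 hj).le, add_nsmul, Nat.add_sub_cancel]
    exact add_mem_add (nsmul_mem_nsmul (mem_insert_self v A))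
      (nsmul_subset_nsmul_left (hSA.trans (subset_insert v A)) hy)
  have hdisj : (range (K + 1) : Set ℕ).PairwiseDisjoint layer := by
    intro i hi j hj hij
    refine disjoint_left.2 fun x hxi hxj => hij ?_
    have := (hlevel i hi x hxi).symm.trans (hlevel j hj x hxj)
    have : (i : ℝ) = j := by nlinarith
    exact_mod_cast this
  have hbelow : Disjoint ((K + 1) • A) ((range (K + 1)).biUnion layer) := by
    refine disjoint_left.2 fun x hx hx' => ?_
    obtain ⟨j, hj, hxj⟩ := mem_biUnion.1 hx'
    have h₁ := map_le_of_mem_nsmul f hA hx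
    have h₂ := hlevel j hj x hxj
    have : (j : ℝ) < K + 1 := by exact_mod_cast mem_range.1 hj
    push_cast at h₁
    nlinarith
  calc #((K + 1) • A) + ∑ j ∈ range (K + 1), #(j • S)
      = #((K + 1) • A ∪ (range (K + 1)).biUnion layer) := by
        rw [card_union_of_disjoint hbelow, card_biUnion hdisj]
        simp [layer, card_vadd_finset]
    _ ≤ #((K + 1) • insert v A) :=
        card_le_card (union_subset (nsmul_subset_nsmul_left (subset_insert v A))
          (biUnion_subset.2 hlayer))

noncomputable def affineDim (A : Finset E) : ℕ := finrank ℝ (vectorSpan ℝ (A : Set E))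

theorem affineDim_singleton (v : E) : affineDim ({v} : Finset E) = 0 := by
  rw [affineDim, coe_singleton, vectorSpan_singleton, finrank_bot]

theorem affineDim_lt_card [DecidableEq E] {A : Finset E} (hA : A.Nonempty) :
    affineDim A < #A := by
  have hcard := hA.card_pos
  have := finrank_vectorSpan_image_finset_le ℝ id A (n := #A - 1) (by omega)
  rw [image_id] at this
  unfold affineDim
  omega

theorem affineDim_congr {A B : Finset E}
    (h : affineSpan ℝ (A : Set E) = affineSpan ℝ (B : Set E)) : affineDim A = affineDim B := by
  rw [affineDim, affineDim, ← direction_affineSpan, h, direction_affineSpan]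

theorem affineDim_insert_of_mem_affineSpan [DecidableEq E] {A : Finset E} {v : E}
    (hv : v ∈ affineSpan ℝ (A : Set E)) : affineDim (insert v A) = affineDim A := by
  rw [affineDim, coe_insert, vectorSpan_insert_eq_vectorSpan hv, affineDim]

theorem affineDim_insert_of_notMem_affineSpan [DecidableEq E] {A : Finset E} {v : E}
    (hA : A.Nonempty) (hv : v ∉ affineSpan ℝ (A : Set E)) :
    affineDim (insert v A) = affineDim A + 1 := by
  obtain ⟨a, ha⟩ := hA
  have := finiteDimensional_vectorSpan_of_finite ℝ (insert v A).finite_toSet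
  refine le_antisymm ?_ (Submodule.finrank_lt_finrank_of_lt ?_)
  · rw [affineDim, affineDim, coe_insert]
    exact finrank_vectorSpan_insert_le_set ℝ (A : Set E) v
  refine (vectorSpan_mono ℝ (by simp)).lt_of_ne fun h => hv ?_
  have : v -ᵥ a ∈ vectorSpan ℝ (A : Set E) :=
    h ▸ vsub_mem_vectorSpan ℝ (by simp) (by simp [ha])
  rw [← direction_affineSpan] at this
  exact (AffineSubspace.vsub_right_mem_direction_iff_mem (subset_affineSpan ℝ _ ha) v).1 this

theorem LinearMap.eq_of_mem_affineSpan (f : E →ₗ[ℝ] ℝ) {s : Set E} {c : ℝ}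
    (hs : ∀ x ∈ s, f x = c) {x : E} (hx : x ∈ affineSpan ℝ s) : f x = c := by
  have : f.toAffineMap x ∈ (affineSpan ℝ s).map f.toAffineMap :=
    AffineSubspace.mem_map.2 ⟨x, hx, rfl⟩
  rw [AffineSubspace.map_span] at this
  have hsub : f.toAffineMap '' s ⊆ {c} := by
    rintro _ ⟨y, hy, rfl⟩
    simp [hs y hy]
  simpa using affineSpan_mono ℝ hsub this

theorem AffineSubspace.exists_linearMap_lt_of_notMem (W : AffineSubspace ℝ E) {p q : E}
    (hq : q ∈ W) (hp : p ∉ W) : ∃ g : E →ₗ[ℝ] ℝ, (∀ x ∈ W, g x = g q) ∧ g q < g p := by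
  have hpq : p -ᵥ q ∉ W.direction := fun h => hp ((vsub_right_mem_direction_iff_mem hq p).1 h)
  obtain ⟨g, hg, hW⟩ := W.direction.exists_dual_map_eq_bot_of_notMem hpq inferInstance
  have hker : ∀ x ∈ W, g (x - q) = 0 := fun x hx =>
    (Submodule.mem_bot ℝ).1 (hW ▸ Submodule.mem_map_of_mem (W.vsub_mem_direction hx hq))
  refine ⟨(g (p - q))⁻¹ • g, fun x hx => ?_, ?_⟩
  · have := hker x hx
    rw [map_sub, sub_eq_zero] at this
    simp [this]
  · have : (g (p - q))⁻¹ * g (p - q) = 1 := inv_mul_cancel₀ hg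
    simp only [LinearMap.smul_apply, smul_eq_mul, map_sub, mul_sub] at this ⊢
    linarith

/-- Rotating the hyperplane `f = c` about `{g = g v}`: `t` is the first time the hyperplane
`f + t • g = c + t * g v` meets a point `a` of `A` with `g v < g a`. -/
theorem exists_tilt_with_larger_face {A : Finset E} {f g : E →ₗ[ℝ] ℝ} {c : ℝ} {v a₀ : E}
    (hA : ∀ a ∈ A, f a ≤ c) (hg : ∀ a ∈ A, f a = c → g a = g v) (ha₀ : a₀ ∈ A)
    (hga₀ : g v < g a₀) :
    ∃ t : ℝ, (∀ a ∈ A, (f + t • g) a ≤ c + t * g v) ∧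
      {a ∈ A | f a = c} ⊂ {a ∈ A | (f + t • g) a = c + t * g v} := by
  obtain ⟨a₁, ha₁, hmin⟩ := {a ∈ A | g v < g a}.exists_min_image
    (fun a => (c - f a) / (g a - g v)) ⟨a₀, mem_filter.2 ⟨ha₀, hga₀⟩⟩
  obtain ⟨ha₁A, hga₁⟩ := mem_filter.1 ha₁
  set t := (c - f a₁) / (g a₁ - g v)
  have ht : 0 ≤ t := div_nonneg (by linarith [hA a₁ ha₁A]) (by linarith)
  have hta₁ : t * (g a₁ - g v) = c - f a₁ := div_mul_cancel₀ _ (by linarith)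
  have hle : ∀ a ∈ A, (f + t • g) a ≤ c + t * g v := by
    intro a ha
    simp only [LinearMap.add_apply, LinearMap.smul_apply, smul_eq_mul]
    rcases le_or_gt (g a) (g v) with hga | hga
    · nlinarith [hA a ha]
    · have := hmin a (mem_filter.2 ⟨ha, hga⟩)
      rw [le_div_iff₀ (by linarith)] at this
      linarith
  refine ⟨t, hle, Finset.ssubset_iff_subset_ne.2 ⟨fun a ha => ?_, fun h => ?_⟩⟩
  · obtain ⟨haA, hfa⟩ := mem_filter.1 ha
    simp [haA, hfa, hg a haA hfa]
  · have : a₁ ∈ {a ∈ A | f a = c} := by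
      rw [h]
      refine mem_filter.2 ⟨ha₁A, ?_⟩
      simp only [LinearMap.add_apply, LinearMap.smul_apply, smul_eq_mul]
      linarith
    exact hga₁.ne' (hg a₁ ha₁A (mem_filter.1 this).2)

theorem freimanBound_insert_le_of_notMem_affineSpan [DecidableEq E] {A : Finset E} {v : E}
    (hA : A.Nonempty) (hv : v ∉ affineSpan ℝ (A : Set E))
    (ih : ∀ J, freimanBound (affineDim A) J #A ≤ #((J + 1) • A)) (K : ℕ) :
    freimanBound (affineDim (insert v A)) K #(insert v A) ≤ #((K + 1) • insert v A) := by
  obtain ⟨a₀, ha₀⟩ := hA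
  obtain ⟨g, hgA, hgv⟩ :=
    (affineSpan ℝ (A : Set E)).exists_linearMap_lt_of_notMem (subset_affineSpan ℝ _ ha₀) hv
  have hgA' : ∀ a ∈ A, g a = g a₀ := fun a ha => hgA a (subset_affineSpan ℝ _ ha)
  have hcount := card_nsmul_add_sum_card_nsmul_le g Subset.rfl (fun a ha => (hgA' a ha).le) hgA'
    hgv K
  have hsum : 1 + ∑ J ∈ range (K + 1), #((J + 1) • A) =
      #((K + 1) • A) + ∑ j ∈ range (K + 1), #(j • A) := by
    have h₁ := sum_range_succ (fun j => #(j • A)) (K + 1)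
    have h₂ := sum_range_succ' (fun j => #(j • A)) (K + 1)
    simp only [zero_nsmul, card_zero] at h₂
    omega
  rw [affineDim_insert_of_notMem_affineSpan ⟨a₀, ha₀⟩ hv,
    card_insert_of_notMem fun h => hv (subset_affineSpan ℝ _ h), Nat.cast_succ, freimanBound_succ]
  calc 1 + ∑ J ∈ range (K + 1), freimanBound (affineDim A) J #A
      ≤ 1 + ∑ J ∈ range (K + 1), (#((J + 1) • A) : ℝ) := by gcongr with J; exact ih J
    _ ≤ #((K + 1) • insert v A) := by exact_mod_cast hsum ▸ hcount

end VectorSpace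

section NormedSpace

variable {E : Type*} [NormedAddCommGroup E] [NormedSpace ℝ E]

theorem exists_mem_notMem_convexHull_erase [DecidableEq E] {A : Finset E} (hA : A.Nonempty) :
    ∃ v ∈ A, v ∉ convexHull ℝ (A.erase v : Set E) := by
  obtain ⟨v, hv⟩ := (A.finite_toSet.isCompact_convexHull ℝ).extremePoints_nonempty
    (convexHull_nonempty_iff.2 hA.to_set)
  refine ⟨v, extremePoints_convexHull_subset hv, fun hmem => ?_⟩
  rw [(convex_convexHull ℝ _).mem_extremePoints_iff_mem_sdiff_convexHull_sdiff] at hv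
  refine hv.2 (convexHull_mono ?_ hmem)
  rw [coe_erase]
  exact Set.sdiff_subset_sdiff_left (subset_convexHull ℝ _)

/-- A face of maximal size among those cut out of `A` by hyperplanes separating it from `v` is a
facet visible from `v`: otherwise `exists_tilt_with_larger_face` enlarges it. -/
theorem exists_visible_facet {A : Finset E} {v : E} (hv : v ∉ convexHull ℝ (A : Set E)) :
    ∃ (f : E →ₗ[ℝ] ℝ) (c : ℝ), (∀ a ∈ A, f a ≤ c) ∧ c < f v ∧
      (A : Set E) ⊆ affineSpan ℝ (insert v (({a ∈ A | f a = c} : Finset E) : Set E)) := by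
  classical
  set faces := A.powerset.filter fun S => ∃ (f : E →ₗ[ℝ] ℝ) (c : ℝ),
    (∀ a ∈ A, f a ≤ c) ∧ c < f v ∧ S = {a ∈ A | f a = c}
  obtain ⟨f₀, u, hf₀A, hf₀v⟩ := geometric_hahn_banach_closed_point (convex_convexHull ℝ _)
    (A.finite_toSet.isClosed_convexHull ℝ) hv
  have h₀ : {a ∈ A | (f₀ : E →ₗ[ℝ] ℝ) a = u} ∈ faces :=
    mem_filter.2 ⟨mem_powerset.2 (filter_subset _ _), f₀, u,
      fun a ha => (hf₀A a (subset_convexHull ℝ _ ha)).le, hf₀v, rfl⟩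
  obtain ⟨S, hS, hmax⟩ := faces.exists_max_image card ⟨_, h₀⟩
  obtain ⟨f, c, hfA, hfv, rfl⟩ := (mem_filter.1 hS).2
  refine ⟨f, c, hfA, hfv, fun a ha => by_contra fun ha' => ?_⟩
  obtain ⟨g, hgW, hgv⟩ := AffineSubspace.exists_linearMap_lt_of_notMem _
    (mem_affineSpan ℝ (Set.mem_insert v _)) ha'
  obtain ⟨t, ht, hlt⟩ := exists_tilt_with_larger_face hfA (fun b hb hfb => hgW b
    (subset_affineSpan ℝ _ (Set.mem_insert_of_mem _ (mem_filter.2 ⟨hb, hfb⟩)))) ha hgv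
  have := hmax _ (mem_filter.2 ⟨mem_powerset.2 (filter_subset _ _), f + t • g, c + t * g v, ht,
    by simpa using hfv, rfl⟩)
  exact (card_lt_card hlt).not_ge this

theorem exists_visible_facet_of_mem_affineSpan [DecidableEq E] {A : Finset E} {v : E}
    (hvA : v ∉ convexHull ℝ (A : Set E)) (hv : v ∈ affineSpan ℝ (A : Set E)) :
    ∃ (f : E →ₗ[ℝ] ℝ) (c : ℝ), (∀ a ∈ A, f a ≤ c) ∧ c < f v ∧
      ({a ∈ A | f a = c} : Finset E).Nonempty ∧
      affineDim A = affineDim ({a ∈ A | f a = c} : Finset E) + 1 := by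
  obtain ⟨f, c, hfA, hfv, hspan⟩ := exists_visible_facet hvA
  set S := {a ∈ A | f a = c}
  have hA : A.Nonempty := nonempty_iff_ne_empty.2 fun h => by
    simp [h, AffineSubspace.notMem_bot] at hv
  have hS : S.Nonempty := by
    obtain ⟨a, ha⟩ := hA
    refine nonempty_iff_ne_empty.2 fun h => hvA (subset_convexHull ℝ _ ?_)
    have : a ∈ affineSpan ℝ _ := hspan ha
    rw [h, coe_empty, insert_empty_eq, AffineSubspace.mem_affineSpan_singleton] at this
    exact this ▸ ha
  have hvS : v ∉ affineSpan ℝ (S : Set E) :=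
    fun h => hfv.ne' (f.eq_of_mem_affineSpan (fun a ha => (mem_filter.1 ha).2) h)
  have hspanS : affineSpan ℝ ((insert v S : Finset E) : Set E) =
      affineSpan ℝ ((insert v A : Finset E) : Set E) := by
    rw [coe_insert, coe_insert]
    exact le_antisymm (affineSpan_mono ℝ (Set.insert_subset_insert (filter_subset _ _)))
      (affineSpan_le.2 (Set.insert_subset (mem_affineSpan ℝ (Set.mem_insert _ _)) hspan))
  refine ⟨f, c, hfA, hfv, hS, ?_⟩
  rw [← affineDim_insert_of_mem_affineSpan hv, ← affineDim_congr hspanS,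
    affineDim_insert_of_notMem_affineSpan hS hvS]

theorem freimanBound_insert_le_of_mem_affineSpan [DecidableEq E] {A : Finset E} {v : E}
    (hvA : v ∉ convexHull ℝ (A : Set E)) (hv : v ∈ affineSpan ℝ (A : Set E))
    (ih : ∀ B ⊆ A, B.Nonempty → ∀ J, freimanBound (affineDim B) J #B ≤ #((J + 1) • B))
    (K : ℕ) :
    freimanBound (affineDim (insert v A)) K #(insert v A) ≤ #((K + 1) • insert v A) := by
  obtain ⟨f, c, hfA, hfv, hS, hdimA⟩ := exists_visible_facet_of_mem_affineSpan hvA hv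
  set S := {a ∈ A | f a = c}
  have hcount := card_nsmul_add_sum_card_nsmul_le f (filter_subset _ _) hfA
    (fun a ha => (mem_filter.1 ha).2) hfv K
  have hsum : ∑ j ∈ range (K + 1), #(j • S) = 1 + ∑ J ∈ range K, #((J + 1) • S) := by
    rw [sum_range_succ', zero_nsmul, card_zero, add_comm]
  rw [affineDim_insert_of_mem_affineSpan hv,
    card_insert_of_notMem fun h => hvA (subset_convexHull ℝ _ h), hdimA, Nat.cast_succ]
  set M := affineDim S
  calc freimanBound (M + 1) K (#A + 1)
      = freimanBound (M + 1) K #A + (1 + ∑ J ∈ range K, freimanBound M J (M + 1)) := by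
        rw [one_add_sum_freimanBound_simplex]
        unfold freimanBound
        ring
    _ ≤ #((K + 1) • A) + (1 + ∑ J ∈ range K, (#((J + 1) • S) : ℝ)) := by
        gcongr with J
        · exact hdimA ▸ ih A Subset.rfl (hS.mono (filter_subset _ _)) K
        · exact (freimanBound_mono M J (by exact_mod_cast affineDim_lt_card hS)).trans
            (ih S (filter_subset _ _) hS J)
    _ ≤ #((K + 1) • insert v A) := by exact_mod_cast hsum ▸ hcount

theorem freimanBound_le_card_nsmul [DecidableEq E] (A : Finset E) (hA : A.Nonempty) (K : ℕ) :
    freimanBound (affineDim A) K #A ≤ #((K + 1) • A) := by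
  induction A using Finset.strongInduction generalizing K with
  | H A ih =>
  obtain ⟨v, hvA, hv⟩ := exists_mem_notMem_convexHull_erase hA
  have ih' : ∀ B ⊆ A.erase v, B.Nonempty → ∀ J,
      freimanBound (affineDim B) J #B ≤ #((J + 1) • B) := fun B hB =>
    ih B (hB.trans_ssubset (erase_ssubset hvA))
  rw [← insert_erase hvA]
  rcases (A.erase v).eq_empty_or_nonempty with hA' | hA'
  · simp [hA', affineDim_singleton, freimanBound]
  by_cases hvA' : v ∈ affineSpan ℝ (A.erase v : Set E)
  · exact freimanBound_insert_le_of_mem_affineSpan hv hvA' ih' K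
  · exact freimanBound_insert_le_of_notMem_affineSpan hA' hvA' (ih' _ Subset.rfl hA') K

end NormedSpace

/-- k-fold Freiman lemma: if `A ⊆ ℝ^d` is finite with affine span of dimension `d`, then
`|kA| ≥ C(k+d-1, d)|A| - (k-1) C(k+d-1, d-1)`. -/
theorem stmt_14 (d k : ℕ) (hd : 0 < d) (hk : 0 < k)
    (A : Finset (Fin d → ℝ)) (hA : A.Nonempty)
    (hdim : affineSpan ℝ (A : Set (Fin d → ℝ)) = ⊤) :
    ((k + d - 1).choose d : ℝ) * A.card -
      ((k : ℝ) - 1) * ((k + d - 1).choose (d - 1)) ≤ ((k • A).card : ℝ) := by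
  obtain ⟨K, rfl⟩ : ∃ K, k = K + 1 := ⟨k - 1, by omega⟩
  obtain ⟨M, rfl⟩ : ∃ M, d = M + 1 := ⟨d - 1, by omega⟩
  have hdimA : affineDim A = M + 1 := by
    rw [affineDim, ← direction_affineSpan, hdim, AffineSubspace.direction_top, finrank_top,
      finrank_fin_fun]
  have hchoose : (K + (M + 1)).choose M = (K + (M + 1)).choose (K + 1) :=
    Nat.choose_symm_of_eq_add (by omega)
  have := freimanBound_le_card_nsmul A hA K
  rw [hdimA, freimanBound, ← hchoose] at this
  rw [show K + 1 + (M + 1) - 1 = K + (M + 1) by omega, Nat.add_sub_cancel]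
  push_cast at this ⊢
  simpa using this
end

section
/- Let $k, N, d$ be positive integers with $N \geq d+1$, and let $A_{d,N} = \{0, e_2, \dots, e_d\} \cup \{e_1, 2e_1, \dots, (N-d)e_1\} \subset \mathbb{Z}^d$. Then $|kA_{d,N}| = \binom{k+d-1}{d}(N-d) + \binom{k+d-1}{d-1}$. -/
/-!
Write `A_{d,N}` as the image in `ℤ^d` of the lattice points `T₁` of the simplex
`conv {0, M e₁, e₂, …, e_d}` in `ℕ^d`, where `M = N - d`, and let `T_k` be the lattice points of
its `k`-th dilate. Peeling off one generator at a time shows `T_{k+1} = T_k + T₁`, so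
`k A_{d,N}` is the image of `T_k`. A point `f ∈ T_k` is determined by its first coordinate
`v` and by the weak composition `h` of `k` obtained by replacing `f₁` with the slack
`k - (f₂ + ⋯ + f_d)`; the admissible `v` are `0, …, h₁ M`. Summing over the `C(k+d-1, d-1)`
compositions, whose first parts add up to `C(k+d-1, d)` by symmetry, gives the count.
-/

open scoped Pointwise

open Finset

variable {ι : Type*} [Fintype ι] [DecidableEq ι]

lemma card_piAntidiag_univ (n : ℕ) :
    #(piAntidiag (univ : Finset ι) n) = (Fintype.card ι + n - 1).choose n := by
  rw [← map_sym_eq_piAntidiag, card_map, sym_univ, card_univ, Sym.card_sym_eq_choose]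

lemma sum_apply_piAntidiag_univ_comm (i j : ι) (n : ℕ) :
    ∑ f ∈ piAntidiag univ n, f i = ∑ f ∈ piAntidiag univ n, f j := by
  refine sum_nbij' (· ∘ Equiv.swap i j) (· ∘ Equiv.swap i j) ?_ ?_ ?_ ?_ ?_ <;>
    intro f hf <;> simp_all [Function.comp_def, Equiv.sum_comp (Equiv.swap i j) f]

lemma card_mul_sum_apply_piAntidiag_univ (i : ι) (n : ℕ) :
    Fintype.card ι * ∑ f ∈ piAntidiag univ n, f i = n * #(piAntidiag (univ : Finset ι) n) := by
  calc Fintype.card ι * ∑ f ∈ piAntidiag univ n, f i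
      = ∑ j, ∑ f ∈ piAntidiag univ n, f j := by
        rw [sum_congr rfl fun j _ => (sum_apply_piAntidiag_univ_comm i j n).symm, sum_const,
          card_univ, smul_eq_mul]
    _ = ∑ f ∈ piAntidiag univ n, ∑ j, f j := sum_comm
    _ = n * #(piAntidiag (univ : Finset ι) n) := by
        rw [sum_congr rfl fun f hf => (mem_piAntidiag.1 hf).1, sum_const, smul_eq_mul, mul_comm]

lemma sum_apply_piAntidiag_univ (i : ι) (n : ℕ) :
    ∑ f ∈ piAntidiag univ n, f i = (Fintype.card ι + n - 1).choose (Fintype.card ι) := by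
  obtain ⟨d, hd⟩ : ∃ d, Fintype.card ι = d + 1 :=
    Nat.exists_eq_succ_of_ne_zero (Fintype.card_pos_iff.2 ⟨i⟩).ne'
  have key := card_mul_sum_apply_piAntidiag_univ i n
  rw [card_piAntidiag_univ, hd, show d + 1 + n - 1 = d + n by omega] at key
  rw [hd, show d + 1 + n - 1 = d + n by omega]
  refine Nat.eq_of_mul_eq_mul_left d.succ_pos ?_
  rw [key, mul_comm (d + 1), Nat.choose_succ_right_eq, Nat.add_sub_cancel_left, mul_comm n,
    Nat.choose_symm_add]

variable (i : ι)

def tailSum (f : ι → ℕ) : ℕ := ∑ j ∈ univ.erase i, f j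

lemma apply_add_tailSum (f : ι → ℕ) : f i + tailSum i f = ∑ j, f j :=
  add_sum_erase _ _ (mem_univ i)

lemma tailSum_add (f g : ι → ℕ) : tailSum i (f + g) = tailSum i f + tailSum i g :=
  sum_add_distrib

lemma tailSum_update_self (f : ι → ℕ) (v : ℕ) : tailSum i (Function.update f i v) = tailSum i f :=
  sum_congr rfl fun _ hj => Function.update_of_ne (ne_of_mem_erase hj) _ _

lemma apply_le_tailSum (f : ι → ℕ) {j : ι} (hj : j ≠ i) : f j ≤ tailSum i f :=
  single_le_sum (fun _ _ => Nat.zero_le _) (mem_erase.2 ⟨hj, mem_univ j⟩)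

lemma tailSum_single {j : ι} (hj : j ≠ i) (v : ℕ) : tailSum i (Pi.single j v) = v := by
  simp [tailSum, hj]

lemma tailSum_single_self (v : ℕ) : tailSum i (Pi.single i v) = 0 :=
  sum_eq_zero fun _ hj => by simp [ne_of_mem_erase hj]

/-- The lattice points of `k • conv {0, M • e i, e j (j ≠ i)}`; the box only makes the set
visibly finite. -/
def longSimplex (M k : ℕ) : Finset (ι → ℕ) :=
  {f ∈ Icc 0 (fun _ => k * M + k) | tailSum i f ≤ k ∧ f i + tailSum i f * M ≤ k * M}

variable {i} {M k l : ℕ} {f g : ι → ℕ}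

lemma mem_longSimplex :
    f ∈ longSimplex i M k ↔ tailSum i f ≤ k ∧ f i + tailSum i f * M ≤ k * M := by
  refine mem_filter.trans <| and_iff_right_of_imp fun ⟨hs, hi⟩ =>
    mem_Icc.2 ⟨fun _ => Nat.zero_le _, fun j => ?_⟩
  show f j ≤ k * M + k
  by_cases hj : j = i
  · subst hj; omega
  · have := apply_le_tailSum i f hj
    omega

lemma add_mem_longSimplex (hf : f ∈ longSimplex i M k) (hg : g ∈ longSimplex i M l) :
    f + g ∈ longSimplex i M (k + l) := by
  rw [mem_longSimplex, tailSum_add, Pi.add_apply] at *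
  constructor <;> nlinarith

lemma single_mem_longSimplex_one {j : ι} (hj : j ≠ i) : Pi.single j 1 ∈ longSimplex i M 1 := by
  simp [mem_longSimplex, tailSum_single i hj, Pi.single_eq_of_ne' hj]

lemma single_self_mem_longSimplex {v : ℕ} (hv : v ≤ k * M) :
    Pi.single i v ∈ longSimplex i M k := by
  simpa [mem_longSimplex, tailSum_single_self] using hv

lemma longSimplex_zero : longSimplex i M 0 = 0 := by
  ext f
  simp only [mem_longSimplex, nonpos_iff_eq_zero, zero_mul, add_eq_zero, mem_zero]
  refine ⟨fun ⟨hs, hi, _⟩ => funext fun j => ?_, fun hf => by simp [hf, tailSum]⟩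
  by_cases hj : j = i
  · rwa [hj]
  · exact Nat.le_zero.1 (hs ▸ apply_le_tailSum i f hj)

lemma exists_add_single_of_mem_longSimplex_succ (hf : f ∈ longSimplex i M (k + 1)) :
    ∃ g ∈ longSimplex i M k,
      (∃ j ≠ i, f = g + Pi.single j 1) ∨ ∃ v ≤ M, f = g + Pi.single i v := by
  rw [mem_longSimplex] at hf
  by_cases hs : tailSum i f = 0
  · refine ⟨Function.update f i (f i - M), ?_, Or.inr ⟨min (f i) M, min_le_right _ _, ?_⟩⟩
    · rw [mem_longSimplex, tailSum_update_self, hs, Function.update_self]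
      rw [hs, zero_mul, add_zero, add_one_mul] at hf
      omega
    · funext x
      rcases eq_or_ne x i with rfl | hx
      · simp only [Pi.add_apply, Function.update_self, Pi.single_eq_same]
        omega
      · simp [hx]
  · obtain ⟨j, hj, hfj⟩ := exists_ne_zero_of_sum_ne_zero hs
    have hle : Pi.single j 1 ≤ f := fun x => by
      rcases eq_or_ne x j with rfl | hx
      · simpa [Nat.one_le_iff_ne_zero] using hfj
      · simp [hx]
    obtain ⟨g, rfl⟩ : ∃ g : ι → ℕ, f = g + Pi.single j 1 :=
      ⟨f - Pi.single j 1, (tsub_add_cancel_of_le hle).symm⟩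
    refine ⟨g, ?_, Or.inl ⟨j, ne_of_mem_erase hj, rfl⟩⟩
    rw [tailSum_add, tailSum_single i (ne_of_mem_erase hj), Pi.add_apply,
      Pi.single_eq_of_ne' (ne_of_mem_erase hj)] at hf
    rw [mem_longSimplex]
    constructor <;> nlinarith

lemma longSimplex_succ : longSimplex i M (k + 1) = longSimplex i M k + longSimplex i M 1 := by
  ext f
  refine ⟨fun hf => ?_, ?_⟩
  · obtain ⟨g, hg, ⟨j, hj, rfl⟩ | ⟨v, hv, rfl⟩⟩ := exists_add_single_of_mem_longSimplex_succ hf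
    · exact add_mem_add hg (single_mem_longSimplex_one hj)
    · exact add_mem_add hg (single_self_mem_longSimplex (by rwa [one_mul]))
  · rw [mem_add]
    rintro ⟨g, hg, e, he, rfl⟩
    exact add_mem_longSimplex hg he

lemma nsmul_longSimplex_one (k : ℕ) : k • longSimplex i M 1 = longSimplex i M k := by
  induction k with
  | zero => rw [zero_nsmul, longSimplex_zero]
  | succ k ih => rw [succ_nsmul, ih, ← longSimplex_succ]

lemma longSimplex_one :
    longSimplex i M 1 =
      {0} ∪ (univ.filter (· ≠ i)).image (Pi.single · 1) ∪ (Icc 1 M).image (Pi.single i) := by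
  ext f
  simp only [mem_union, mem_singleton, mem_image, mem_filter, mem_univ, true_and, mem_Icc]
  constructor
  · intro hf
    obtain ⟨g, hg, ⟨j, hj, rfl⟩ | ⟨v, hv, rfl⟩⟩ := exists_add_single_of_mem_longSimplex_succ hf
    all_goals rw [longSimplex_zero, mem_zero] at hg; subst hg; rw [zero_add]
    · exact Or.inl (Or.inr ⟨j, hj, rfl⟩)
    · rcases Nat.eq_zero_or_pos v with rfl | hv0
      · exact Or.inl (Or.inl (Pi.single_zero i))
      · exact Or.inr ⟨v, ⟨hv0, hv⟩, rfl⟩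
  · rintro ((rfl | ⟨j, hj, rfl⟩) | ⟨v, ⟨-, hv⟩, rfl⟩)
    · simpa using single_self_mem_longSimplex (i := i) (M := M) (k := 1) (Nat.zero_le _)
    · exact single_mem_longSimplex_one hj
    · exact single_self_mem_longSimplex (by rwa [one_mul])

lemma card_longSimplex_eq_card_sigma (k : ℕ) :
    #(longSimplex i M k) = #((piAntidiag univ k).sigma fun h : ι → ℕ => range (h i * M + 1)) := by
  refine card_nbij' (fun f => ⟨Function.update f i (k - tailSum i f), f i⟩)
    (fun p => Function.update p.1 i p.2) ?_ ?_ ?_ ?_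
  · intro f hf
    rw [mem_coe, mem_longSimplex] at hf
    simp only [mem_coe, mem_sigma, mem_piAntidiag, mem_range, Function.update_self]
    refine ⟨⟨?_, fun _ _ => mem_univ _⟩, ?_⟩
    · rw [← apply_add_tailSum i, Function.update_self, tailSum_update_self]
      omega
    · rw [Nat.sub_mul]
      omega
  · rintro ⟨h, v⟩ hp
    simp only [mem_coe, mem_sigma, mem_piAntidiag, mem_range] at hp
    have hsum : h i + tailSum i h = k := (apply_add_tailSum i h).trans hp.1.1
    have hk : h i * M + tailSum i h * M = k * M := by rw [← add_mul, hsum]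
    simp only [mem_coe, mem_longSimplex, tailSum_update_self, Function.update_self]
    omega
  · intro f _
    simp
  · rintro ⟨h, v⟩ hp
    simp only [mem_coe, mem_sigma, mem_piAntidiag] at hp
    have hhi : k - tailSum i h = h i := by
      rw [← hp.1.1, ← apply_add_tailSum i h, Nat.add_sub_cancel]
    simp [tailSum_update_self, hhi]

lemma card_longSimplex (k : ℕ) :
    #(longSimplex i M k) =
      (Fintype.card ι + k - 1).choose (Fintype.card ι) * M + (Fintype.card ι + k - 1).choose k := by
  rw [card_longSimplex_eq_card_sigma, card_sigma]
  simp only [card_range, sum_add_distrib, ← sum_mul, sum_apply_piAntidiag_univ, sum_const,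
    card_piAntidiag_univ, smul_eq_mul, mul_one]

theorem stmt_15_general (k N d : ℕ) (hd : 0 < d)
    (A : Finset (Fin d → ℤ))
    (hA : A = {(0 : Fin d → ℤ)} ∪
        (Finset.univ.filter (fun j : Fin d => j ≠ ⟨0, hd⟩)).image
          (fun j => Pi.single j (1 : ℤ)) ∪
        (Finset.Icc 1 (N - d)).image (fun m : ℕ => Pi.single (⟨0, hd⟩ : Fin d) (m : ℤ))) :
    (k • A).card = (k + d - 1).choose d * (N - d) + (k + d - 1).choose (d - 1) := by
  let cast : (Fin d → ℕ) →+ (Fin d → ℤ) := (Nat.castAddMonoidHom ℤ).compLeft (Fin d)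
  have cast_single (j : Fin d) (v : ℕ) : cast (Pi.single j v) = Pi.single j (v : ℤ) :=
    funext (Pi.apply_single (fun _ (n : ℕ) => (n : ℤ)) (fun _ => Nat.cast_zero) j v)
  have cast_injective : Function.Injective cast := fun _ _ h =>
    funext fun j => Nat.cast_injective (congrFun h j)
  have hA_image : A = (longSimplex ⟨0, hd⟩ (N - d) 1).image cast := by
    simp only [hA, longSimplex_one, image_union, image_singleton, map_zero, image_image,
      Function.comp_def, cast_single, Nat.cast_one]
  rw [hA_image, ← image_nsmul, nsmul_longSimplex_one,
    card_image_of_injective _ cast_injective, card_longSimplex,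
    Fintype.card_fin, add_comm d k, Nat.choose_symm_of_eq_add (by omega : k + d - 1 = k + (d - 1))]

/-- For the long simplex `A_{d,N} = {0, e₂, …, e_d} ∪ {e₁, 2e₁, …, (N-d)e₁} ⊆ ℤ^d`
one has `|k A_{d,N}| = C(k+d-1, d)(N-d) + C(k+d-1, d-1)`. -/
theorem stmt_15 (k N d : ℕ) (hk : 0 < k) (hd : 0 < d) (hN : d + 1 ≤ N)
    (A : Finset (Fin d → ℤ))
    (hA : A = {(0 : Fin d → ℤ)} ∪
        (Finset.univ.filter (fun j : Fin d => j ≠ ⟨0, hd⟩)).image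
          (fun j => Pi.single j (1 : ℤ)) ∪
        (Finset.Icc 1 (N - d)).image (fun m : ℕ => Pi.single (⟨0, hd⟩ : Fin d) (m : ℤ))) :
    (k • A).card = (k + d - 1).choose d * (N - d) + (k + d - 1).choose (d - 1) :=
  stmt_15_general k N d hd A hA
end

section
/- Let $d \geq 3$, let $\mathcal{L}_1 \in \mathrm{GL}_d(\mathbb{R})$ be the identity, and for each $2 \leq j \leq d$ let $\mathcal{L}_j \in \mathrm{GL}_d(\mathbb{R})$ satisfy $\mathcal{L}_j(e_1) = e_j$, $\mathcal{L}_j(e_j) = -e_1$, and $\mathcal{L}_j(e_i) = e_i$ for $i \in [d] \setminus \{1, j\}$. Then $\mathcal{L}_1, \dots, \mathcal{L}_d$ are $\mathbb{R}$-irreducible: there are no subspaces $U, V \subseteq \mathbb{R}^d$ with $\{0\} \neq U \neq \mathbb{R}^d$, $\dim U = \dim V$, and $\mathcal{L}_i(U) \subseteq V$ for all $i \in [d]$. -/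
/-!
Since `𝓛₁ = id`, `U ⊆ V`, and equal dimensions force `U = V`; so `U` is invariant under every
`𝓛_j`. Each `𝓛_j` is a quarter turn of the plane `⟨e₁, e_j⟩` fixing the other basis vectors, so
`(id - 𝓛_j²) / 2` is the projection onto that plane and preserves `U`. A nonzero `y ∈ U` has a
nonzero projection `w` onto some such plane, and `w`, `𝓛_j w` then span it, so `e₁ ∈ U`.
Hence `e_j = 𝓛_j e₁ ∈ U` for all `j`, and `U` is everything.
-/

section CommRing

variable {ι K : Type*} [DecidableEq ι] [CommRing K]

def IsQuarterTurn (f : (ι → K) →ₗ[K] (ι → K)) (o j : ι) : Prop :=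
  f (Pi.single o 1) = Pi.single j 1 ∧ f (Pi.single j 1) = -Pi.single o 1 ∧
    ∀ i, i ≠ o → i ≠ j → f (Pi.single i 1) = Pi.single i 1

namespace IsQuarterTurn

variable {f : (ι → K) →ₗ[K] (ι → K)} {o j : ι}

theorem apply [Finite ι] (h : IsQuarterTurn f o j) (hoj : o ≠ j) (y : ι → K) :
    f y = y - (y o + y j) • Pi.single o 1 + (y o - y j) • Pi.single j 1 := by
  let p : ι → (ι → K) →ₗ[K] K := LinearMap.proj
  let g : (ι → K) →ₗ[K] (ι → K) := LinearMap.id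
    - (p o + p j).smulRight (Pi.single o 1) + (p o - p j).smulRight (Pi.single j 1)
  suffices f = g from LinearMap.congr_fun this y
  refine LinearMap.pi_ext fun i x => ?_
  rw [← mul_one x, ← smul_eq_mul, Pi.single_smul', map_smul, map_smul]
  congr 1
  obtain ⟨ho, hj, hi⟩ := h
  by_cases hio : i = o
  · subst hio
    simp [g, p, ho, hoj]
  by_cases hij : i = j
  · subst hij
    simp [g, p, hj, Ne.symm hoj]
    abel
  · simp [g, p, hi i hio hij, Pi.single_eq_of_ne (Ne.symm hio), Pi.single_eq_of_ne (Ne.symm hij)]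

theorem map_single_add_single (h : IsQuarterTurn f o j) (a b : K) :
    f (a • Pi.single o 1 + b • Pi.single j 1) = -b • Pi.single o 1 + a • Pi.single j 1 := by
  rw [map_add, map_smul, map_smul, h.1, h.2.1, neg_smul, smul_neg]
  abel

theorem sub_apply_apply [Finite ι] (h : IsQuarterTurn f o j) (hoj : o ≠ j) (y : ι → K) :
    y - f (f y) = (2 : K) • (y o • Pi.single o 1 + y j • Pi.single j 1) := by
  have hfo : f y o = -y j := by simp [h.apply hoj, hoj]
  have hfj : f y j = y o := by simp [h.apply hoj, Ne.symm hoj]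
  rw [h.apply hoj (f y), hfo, hfj, h.apply hoj y]
  module

end IsQuarterTurn

end CommRing

section OrderedField

variable {ι K : Type*} [DecidableEq ι] [Finite ι] [Field K] [LinearOrder K] [IsStrictOrderedRing K]
  {U : Submodule K (ι → K)}

theorem IsQuarterTurn.single_mem_of_map_le {f : (ι → K) →ₗ[K] (ι → K)} {o j : ι}
    (h : IsQuarterTurn f o j) (hoj : o ≠ j) (hU : U.map f ≤ U)
    {y : ι → K} (hy : y ∈ U) (hyoj : y o ≠ 0 ∨ y j ≠ 0) : Pi.single o 1 ∈ U := by
  have hfU : ∀ x ∈ U, f x ∈ U := fun x hx => hU (Submodule.mem_map_of_mem hx)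
  set w := y o • Pi.single o 1 + y j • Pi.single j (1 : K)
  have hw : w ∈ U := by
    rw [← U.smul_mem_iff (two_ne_zero (α := K)), ← h.sub_apply_apply hoj]
    exact U.sub_mem hy (hfU _ (hfU _ hy))
  have hsq : y o ^ 2 + y j ^ 2 ≠ 0 := by
    rcases hyoj with hyo | hyj <;> positivity
  have hcomb : (y o ^ 2 + y j ^ 2) • Pi.single o 1 = y o • w - y j • f w := by
    rw [h.map_single_add_single]
    module
  rw [← U.smul_mem_iff hsq, hcomb]
  exact U.sub_mem (U.smul_mem _ hw) (U.smul_mem _ (hfU _ hw))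

theorem Submodule.eq_top_of_map_isQuarterTurn_le [Nontrivial ι] {o : ι}
    {f : ι → (ι → K) →ₗ[K] (ι → K)} (hf : ∀ j ≠ o, IsQuarterTurn (f j) o j)
    (hU : ∀ j ≠ o, U.map (f j) ≤ U) (hU0 : U ≠ ⊥) : U = ⊤ := by
  obtain ⟨y, hy, hy0⟩ := Submodule.exists_mem_ne_zero_of_ne_bot hU0
  obtain ⟨i, hi⟩ := Function.ne_iff.1 hy0
  obtain ⟨j, hjo, hyoj⟩ : ∃ j ≠ o, y o ≠ 0 ∨ y j ≠ 0 := by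
    by_cases hio : i = o
    · obtain ⟨j, hjo⟩ := exists_ne o
      exact ⟨j, hjo, .inl (hio ▸ hi)⟩
    · exact ⟨i, hio, .inr hi⟩
  have ho : Pi.single o 1 ∈ U :=
    (hf j hjo).single_mem_of_map_le (Ne.symm hjo) (hU j hjo) hy hyoj
  have hsingle : ∀ k, Pi.single k 1 ∈ U := fun k => by
    by_cases hko : k = o
    · exact hko ▸ ho
    · exact (hf k hko).1 ▸ hU k hko (Submodule.mem_map_of_mem ho)
  rw [eq_top_iff, ← (Pi.basisFun K ι).span_eq, Submodule.span_le, Set.range_subset_iff]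
  simpa using hsingle

end OrderedField

/-- Let `d ≥ 3`, let `𝓛₁ = id` and for `j ≠ 1` let `𝓛_j` send `e₁ ↦ e_j`, `e_j ↦ -e₁`
and fix the other basis vectors.  Then `𝓛₁, …, 𝓛_d` are `ℝ`-irreducible: there are no
subspaces `U, V ⊆ ℝ^d` with `{0} ≠ U ≠ ℝ^d`, `dim U = dim V` and `𝓛ᵢ(U) ⊆ V` for all
`i`.  (Index `0` of `Fin d` plays the role of the index `1` in the paper.) -/
theorem stmt_17 (d : ℕ) (hd : 3 ≤ d)
    (L : Fin d → ((Fin d → ℝ) →ₗ[ℝ] (Fin d → ℝ)))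
    (hL0 : L ⟨0, by omega⟩ = LinearMap.id)
    (hLj : ∀ j : Fin d, j ≠ ⟨0, by omega⟩ →
      L j (Pi.single (⟨0, by omega⟩ : Fin d) (1 : ℝ)) = Pi.single j (1 : ℝ) ∧
      L j (Pi.single j (1 : ℝ)) = -(Pi.single (⟨0, by omega⟩ : Fin d) (1 : ℝ)) ∧
      ∀ i : Fin d, i ≠ ⟨0, by omega⟩ → i ≠ j →
        L j (Pi.single i (1 : ℝ)) = Pi.single i (1 : ℝ)) :
    ¬ ∃ U V : Submodule ℝ (Fin d → ℝ), U ≠ ⊥ ∧ U ≠ ⊤ ∧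
        Module.finrank ℝ U = Module.finrank ℝ V ∧
        ∀ i, U.map (L i) ≤ V := by
  rintro ⟨U, V, hU0, hUtop, hdim, hUV⟩
  have hUleV : U ≤ V := by simpa [hL0] using hUV ⟨0, by omega⟩
  obtain rfl := Submodule.eq_of_le_of_finrank_eq hUleV hdim
  have : Nontrivial (Fin d) := Fin.nontrivial_iff_two_le.2 (by omega)
  exact hUtop (Submodule.eq_top_of_map_isQuarterTurn_le hLj (fun j _ => hUV j) hU0)
end

section
/- Let $\mathcal{L}_1 = \begin{pmatrix} 1 & 1 \\ 0 & 1 \end{pmatrix}$, $\mathcal{L}_2 = \begin{pmatrix} 1 & 1 \\ -1 & 1 \end{pmatrix}$, and $A = \{(0, i) : i \in [N]\} \subset \mathbb{Q}^2$ for a positive integer $N$. Then $X = \mathcal{L}_1(A) + \mathcal{L}_2(A) = \{(i, i) : 2 \leq i \leq 2N\}$ satisfies $|X| = 2N - 1 \leq 2|A|$, while $|\mathcal{L}_1(X) + \mathcal{L}_2(X)| = |X|^2 \geq |A|^2$. -/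
open scoped Pointwise

/-- For `𝓛₁ = [[1,1],[0,1]]`, `𝓛₂ = [[1,1],[-1,1]]` and `A = {(0, i) : i ∈ [N]} ⊆ ℚ²`,
the set `X = 𝓛₁(A) + 𝓛₂(A)` equals `{(i, i) : 2 ≤ i ≤ 2N}`, so `|X| = 2N - 1 ≤ 2|A|`,
while `|𝓛₁(X) + 𝓛₂(X)| = |X|² ≥ |A|²`. -/
theorem stmt_19 (N : ℕ) (hN : 1 ≤ N)
    (L₁ L₂ : (ℚ × ℚ) →ₗ[ℚ] (ℚ × ℚ))
    (hL₁ : ∀ p : ℚ × ℚ, L₁ p = (p.1 + p.2, p.2))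
    (hL₂ : ∀ p : ℚ × ℚ, L₂ p = (p.1 + p.2, -p.1 + p.2))
    (A : Finset (ℚ × ℚ)) (hA : A = (Finset.Icc 1 N).image (fun i : ℕ => ((0 : ℚ), (i : ℚ))))
    (X : Finset (ℚ × ℚ)) (hX : X = A.image L₁ + A.image L₂) :
    X = (Finset.Icc 2 (2 * N)).image (fun i : ℕ => ((i : ℚ), (i : ℚ))) ∧
    X.card = 2 * N - 1 ∧ X.card ≤ 2 * A.card ∧
    (X.image L₁ + X.image L₂).card = X.card ^ 2 ∧ A.card ^ 2 ≤ X.card ^ 2 := by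
  have hXeq : X = (Finset.Icc 2 (2 * N)).image (fun i : ℕ => ((i : ℚ), (i : ℚ))) := by
    subst hA hX
    ext a
    simp only [Finset.mem_add, Finset.mem_image, Finset.mem_Icc]
    constructor
    · rintro ⟨x, hx, y, hy, rfl⟩
      obtain ⟨x', hx', rfl⟩ := hx
      obtain ⟨i, ⟨hi1, hi2⟩, rfl⟩ := hx'
      obtain ⟨y', hy', rfl⟩ := hy
      obtain ⟨j, ⟨hj1, hj2⟩, rfl⟩ := hy'
      refine ⟨i + j, ⟨by omega, by omega⟩, ?_⟩
      rw [hL₁, hL₂]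
      simp only [Prod.mk_add_mk, Prod.mk.injEq]
      push_cast
      constructor <;> ring
    · rintro ⟨k, ⟨hk1, hk2⟩, rfl⟩
      obtain ⟨i, j, hi1, hi2, hj1, hj2, hij⟩ :
          ∃ i j : ℕ, 1 ≤ i ∧ i ≤ N ∧ 1 ≤ j ∧ j ≤ N ∧ i + j = k := by
        rcases Nat.le_total k (N + 1) with h | h
        · exact ⟨1, k - 1, by omega, by omega, by omega, by omega, by omega⟩
        · exact ⟨k - N, N, by omega, by omega, by omega, by omega, by omega⟩
      refine ⟨_, ⟨_, ⟨i, ⟨hi1, hi2⟩, rfl⟩, rfl⟩, _, ⟨_, ⟨j, ⟨hj1, hj2⟩, rfl⟩, rfl⟩, ?_⟩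
      rw [hL₁, hL₂]
      simp only [Prod.mk_add_mk, Prod.mk.injEq]
      subst hij
      push_cast
      constructor <;> ring
  have hcast : Function.Injective (fun i : ℕ => ((i : ℚ), (i : ℚ))) := by
    intro a b h
    simpa using congrArg Prod.fst h
  have hXcard : X.card = 2 * N - 1 := by
    rw [hXeq, Finset.card_image_of_injective _ hcast, Nat.card_Icc]
    omega
  have hAcard : A.card = N := by
    rw [hA, Finset.card_image_of_injective, Nat.card_Icc]
    · omega
    · intro a b h; simpa using congrArg Prod.snd h
  refine ⟨hXeq, hXcard, by omega, ?_, by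
    rw [hXcard, hAcard]; exact Nat.pow_le_pow_left (by omega) 2⟩
  have hsum : X.image L₁ + X.image L₂ =
      ((Finset.Icc 2 (2 * N)) ×ˢ (Finset.Icc 2 (2 * N))).image
        (fun p : ℕ × ℕ => ((2 * p.1 + 2 * p.2 : ℚ), (p.1 : ℚ))) := by
    rw [hXeq]
    ext a
    simp only [Finset.mem_add, Finset.mem_image, Finset.mem_Icc, Finset.mem_product]
    constructor
    · rintro ⟨x, hx, y, hy, rfl⟩
      obtain ⟨x', hx', rfl⟩ := hx
      obtain ⟨i, hi, rfl⟩ := hx'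
      obtain ⟨y', hy', rfl⟩ := hy
      obtain ⟨j, hj, rfl⟩ := hy'
      refine ⟨(i, j), ⟨hi, hj⟩, ?_⟩
      rw [hL₁, hL₂]
      simp only [Prod.mk_add_mk, Prod.mk.injEq]
      constructor <;> ring
    · rintro ⟨⟨i, j⟩, ⟨hi, hj⟩, rfl⟩
      refine ⟨_, ⟨_, ⟨i, hi, rfl⟩, rfl⟩, _, ⟨_, ⟨j, hj, rfl⟩, rfl⟩, ?_⟩
      rw [hL₁, hL₂]
      simp only [Prod.mk_add_mk, Prod.mk.injEq]
      constructor <;> ring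
  rw [hsum, Finset.card_image_of_injOn, Finset.card_product, Nat.card_Icc, hXcard]
  · have h2 : 2 * N + 1 - 2 = 2 * N - 1 := by omega
    rw [h2]; ring
  · rintro ⟨a, b⟩ _ ⟨c, d⟩ _ h
    simp only [Prod.mk.injEq] at h
    have hac : a = c := by exact_mod_cast h.2
    have hbd : (b : ℚ) = d := by
      have h1 := h.1
      rw [hac] at h1
      linarith
    exact Prod.ext hac (by exact_mod_cast hbd)
end
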